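/- arXiv:1105.3058 — 7 statements merged into one kernel-verified Lean document; each statement's English description precedes it below -/
import Mathlib

section
/- There is a constant C' ≥ 1, depending only on n and the constant C in the comparability hypothesis between d and μ, such that for every x ∈ ℝⁿ and every r > 0 one has C'⁻¹ rⁿ ≤ μ(B^d(x,r)) ≤ C' rⁿ. In other words, the metric measure space (ℝⁿ, d, μ) is Ahlfors n-regular. -/
/-!
Fix `x` and write `φ ρ = μ (B(x, ρ))`. As `μ` has no atoms and doubling forces `μ ℝⁿ = ∞`,
every level `0 < A < ∞` is crossed by `φ` at some radius `T > 0`: `φ < A` below `T` and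
`φ ≥ A` above it. Since `d(x,y)ⁿ ≈ φ |x - y|`, the level `A = rⁿ / C` gives `B(x, T) ⊆ B^d(x, r)`
and the level `A = C rⁿ` gives `B^d(x, r) ⊆ B̄(x, T)`; one doubling step turns the level into a
bound for the measure of these balls, so `C' = C Cd` works.
-/

open MeasureTheory Metric Filter Set
open scoped Topology ENNReal

theorem Monotone.exists_threshold {α β : Type*} [ConditionallyCompleteLinearOrder α]
    [LinearOrder β] {f : α → β} (hf : Monotone f) {A : β} {a b : α} (ha : f a < A) (hb : A ≤ f b) :
    ∃ T, a ≤ T ∧ (∀ ρ < T, f ρ < A) ∧ ∀ ρ, T < ρ → A ≤ f ρ := by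
  have hbdd : BddAbove {ρ | f ρ < A} := ⟨b, fun ρ hρ => (hf.reflect_lt (hρ.trans_le hb)).le⟩
  refine ⟨sSup {ρ | f ρ < A}, le_csSup hbdd ha, fun ρ hρ => ?_,
    fun ρ hρ => not_lt.1 fun h => (le_csSup hbdd h).not_gt hρ⟩
  obtain ⟨σ, hσ, hρσ⟩ := exists_lt_of_lt_csSup ⟨a, ha⟩ hρ
  exact (hf hρσ.le).trans_lt hσ

section MetricMeasure

variable {E : Type*} [MetricSpace E] [MeasurableSpace E] [OpensMeasurableSpace E] {μ : Measure E}

theorem exists_pos_measure_ball_lt {x : E} (hx : μ {x} = 0) (hfin : ∃ R > 0, μ (ball x R) ≠ ∞)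
    {A : ℝ≥0∞} (hA : 0 < A) : ∃ a > 0, μ (ball x a) < A := by
  have hlim : Tendsto (fun r => μ (ball x r)) (𝓝[>] 0) (𝓝 0) := by
    rw [← hx]
    simpa only [thickening_singleton] using
      tendsto_measure_thickening_of_isClosed (s := {x}) (by simpa only [thickening_singleton])
        isClosed_singleton
  obtain ⟨a, haA, ha⟩ := ((hlim.eventually (gt_mem_nhds hA)).and self_mem_nhdsWithin).exists
  exact ⟨a, ha, haA⟩

theorem exists_radius_threshold_measure_ball {x : E} (hx : μ {x} = 0)
    (hfin : ∃ R > 0, μ (ball x R) ≠ ∞) (huniv : μ univ = ∞) {A : ℝ≥0∞} (hA₀ : 0 < A)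
    (hA : A ≠ ∞) :
    ∃ T > 0, (∀ ρ < T, μ (ball x ρ) < A) ∧ ∀ ρ, T < ρ → A ≤ μ (ball x ρ) := by
  obtain ⟨a, ha, haA⟩ := exists_pos_measure_ball_lt hx hfin hA₀
  have hlim : Tendsto (fun k : ℕ => μ (ball x k)) atTop (𝓝 ∞) := by
    simpa only [Function.comp_def, iUnion_ball_nat, huniv] using
      tendsto_measure_iUnion_atTop (μ := μ) fun i j hij => ball_subset_ball (Nat.cast_le.2 hij)
  obtain ⟨k, hk⟩ := (hlim.eventually (lt_mem_nhds hA.lt_top)).exists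
  have hmono : Monotone fun ρ => μ (ball x ρ) := fun _ _ h => measure_mono (ball_subset_ball h)
  obtain ⟨T, haT, hbelow, habove⟩ := hmono.exists_threshold haA hk.le
  exact ⟨T, ha.trans_le haT, hbelow, habove⟩

end MetricMeasure

section Doubling

variable {E : Type*} [NormedAddCommGroup E] [MeasurableSpace E] {μ : Measure E} {K : ℝ≥0∞}

theorem measure_ball_two_pow_mul_le
    (hdoub : ∀ (x : E) (r : ℝ), 0 < r → μ (ball x (2 * r)) ≤ K * μ (ball x r))
    (x : E) {r : ℝ} (hr : 0 < r) (k : ℕ) : μ (ball x (2 ^ k * r)) ≤ K ^ k * μ (ball x r) := by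
  induction k with
  | zero => simp
  | succ k ih =>
    calc μ (ball x (2 ^ (k + 1) * r)) = μ (ball x (2 * (2 ^ k * r))) := by ring_nf
      _ ≤ K * μ (ball x (2 ^ k * r)) := hdoub x _ (by positivity)
      _ ≤ K * (K ^ k * μ (ball x r)) := by gcongr
      _ = K ^ (k + 1) * μ (ball x r) := by ring

variable [OpensMeasurableSpace E] [NormedSpace ℝ E] [Nontrivial E]

/-- A ball of radius `t / 2` at distance `3t / 2` from `x` fits into `ball x (2 * t)` beside
`ball x t`, and by doubling it carries a fixed proportion of the measure of `ball x t`. -/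
theorem add_one_mul_measure_ball_le
    (hdoub : ∀ (x : E) (r : ℝ), 0 < r → μ (ball x (2 * r)) ≤ K * μ (ball x r))
    (x : E) {t : ℝ} (ht : 0 < t) :
    (K ^ 3 + 1) * μ (ball x t) ≤ K ^ 3 * μ (ball x (2 * t)) := by
  obtain ⟨v, hv⟩ := exists_norm_eq E (c := 3 * t / 2) (by positivity)
  have hdist : dist x (x + v) = 3 * t / 2 := by rw [dist_self_add_right, hv]
  have hdisj : Disjoint (ball x t) (ball (x + v) (t / 2)) :=
    ball_disjoint_ball (by rw [hdist]; linarith)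
  have hsplit : μ (ball x t) + μ (ball (x + v) (t / 2)) ≤ μ (ball x (2 * t)) := by
    rw [← measure_union hdisj measurableSet_ball]
    exact measure_mono (union_subset (ball_subset_ball (by linarith))
      (ball_subset_ball' (by rw [dist_comm, hdist]; linarith)))
  have hcompare : μ (ball x t) ≤ K ^ 3 * μ (ball (x + v) (t / 2)) :=
    calc μ (ball x t) ≤ μ (ball (x + v) (2 ^ 3 * (t / 2))) :=
          measure_mono (ball_subset_ball' (by rw [hdist]; linarith))
      _ ≤ K ^ 3 * μ (ball (x + v) (t / 2)) := measure_ball_two_pow_mul_le hdoub _ (by positivity) 3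
  calc (K ^ 3 + 1) * μ (ball x t) = K ^ 3 * μ (ball x t) + μ (ball x t) := by ring
    _ ≤ K ^ 3 * μ (ball x t) + K ^ 3 * μ (ball (x + v) (t / 2)) := by gcongr
    _ = K ^ 3 * (μ (ball x t) + μ (ball (x + v) (t / 2))) := by ring
    _ ≤ K ^ 3 * μ (ball x (2 * t)) := by gcongr

theorem measure_univ_eq_top_of_doubling (hK : K ≠ ∞)
    (hdoub : ∀ (x : E) (r : ℝ), 0 < r → μ (ball x (2 * r)) ≤ K * μ (ball x r)) (hμ : μ ≠ 0) :
    μ univ = ∞ := by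
  by_contra hfin
  have hunion : μ univ = ⨆ k : ℕ, μ (ball (0 : E) (k + 1)) := by
    rw [← Monotone.measure_iUnion, iUnion_ball_nat_succ]
    exact fun i j hij => ball_subset_ball (by gcongr)
  have hgrow : (K ^ 3 + 1) * μ univ ≤ K ^ 3 * μ univ := by
    rw [hunion, ENNReal.mul_iSup, ← hunion]
    refine iSup_le fun k => (add_one_mul_measure_ball_le hdoub 0 (by positivity)).trans ?_
    gcongr
    exact le_top
  have hzero : μ univ ≤ 0 := by
    have hfin' : K ^ 3 * μ univ ≠ ∞ := ENNReal.mul_ne_top (ENNReal.pow_ne_top hK) hfin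
    refine ENNReal.le_of_add_le_add_left hfin' ?_
    simpa only [add_mul, one_mul, add_zero] using hgrow
  exact hμ (Measure.measure_univ_eq_zero.1 (nonpos_iff_eq_zero.1 hzero))

end Doubling

section Comparison

variable {E : Type*} [PseudoMetricSpace E] [MeasurableSpace E] {μ : Measure E}
  {d : E → E → ℝ} {x : E} {n : ℕ} {C r T : ℝ}

theorem ball_subset_setOf_lt_of_measure_ball_lt (hC : 0 < C) (hr : 0 < r)
    (hcomp : ∀ y, d x y ^ n ≤ C * (μ (ball x (dist x y))).toReal)
    (hT : ∀ ρ < T, μ (ball x ρ) < ENNReal.ofReal (r ^ n / C)) : ball x T ⊆ {y | d x y < r} := by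
  intro y hy
  have hsmall := ENNReal.toReal_lt_of_lt_ofReal (hT _ (mem_ball'.1 hy))
  refine lt_of_pow_lt_pow_left₀ n hr.le ?_
  calc d x y ^ n ≤ C * (μ (ball x (dist x y))).toReal := hcomp y
    _ < C * (r ^ n / C) := by gcongr
    _ = r ^ n := mul_div_cancel₀ _ hC.ne'

theorem setOf_lt_subset_closedBall_of_le_measure_ball (hn : n ≠ 0) (hC : 0 < C) (hT₀ : 0 ≤ T)
    (hd_pos : ∀ y, x ≠ y → 0 < d x y) (hfin : ∀ ρ > 0, μ (ball x ρ) ≠ ∞)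
    (hcomp : ∀ y, C⁻¹ * (μ (ball x (dist x y))).toReal ≤ d x y ^ n)
    (hT : ∀ ρ, T < ρ → ENNReal.ofReal (C * r ^ n) ≤ μ (ball x ρ)) :
    {y | d x y < r} ⊆ closedBall x T := by
  intro y hy
  rcases eq_or_ne x y with rfl | hxy
  · exact mem_closedBall_self hT₀
  rw [mem_closedBall']
  by_contra! hfar
  have hlarge := (ENNReal.ofReal_le_iff_le_toReal (hfin _ (hT₀.trans_lt hfar))).1 (hT _ hfar)
  have hsmall : (μ (ball x (dist x y))).toReal < C * r ^ n :=
    calc (μ (ball x (dist x y))).toReal = C * (C⁻¹ * (μ (ball x (dist x y))).toReal) := by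
          field_simp
      _ ≤ C * d x y ^ n := by gcongr; exact hcomp y
      _ < C * r ^ n := by gcongr; exacts [(hd_pos y hxy).le, hy]
  exact hsmall.not_ge hlarge

end Comparison

theorem ahlfors_regular_of_strongAinfty_general
    (n : ℕ) (hn : 2 ≤ n)
    (ω : EuclideanSpace ℝ (Fin n) → ℝ)
    (μ : Measure (EuclideanSpace ℝ (Fin n)))
    (hμ : μ = volume.withDensity fun x => ENNReal.ofReal (ω x))
    (Cd : ℝ) (hCd : 1 ≤ Cd)
    (hdoub : ∀ (x : EuclideanSpace ℝ (Fin n)) (r : ℝ), 0 < r →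
      μ (ball x (2 * r)) ≤ ENNReal.ofReal Cd * μ (ball x r))
    (hpos : ∀ (x : EuclideanSpace ℝ (Fin n)) (r : ℝ), 0 < r → 0 < μ (ball x r))
    (hfin : ∀ (x : EuclideanSpace ℝ (Fin n)) (r : ℝ), 0 < r → μ (ball x r) < ⊤)
    (d : EuclideanSpace ℝ (Fin n) → EuclideanSpace ℝ (Fin n) → ℝ)
    (hd_pos : ∀ x y, x ≠ y → 0 < d x y)
    (C : ℝ) (hC : 1 ≤ C)
    (hcomp : ∀ x y : EuclideanSpace ℝ (Fin n),
      C⁻¹ * (μ (ball x (dist x y))).toReal ≤ d x y ^ n ∧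
      d x y ^ n ≤ C * (μ (ball x (dist x y))).toReal) :
    ∃ C' : ℝ, 1 ≤ C' ∧ ∀ (x : EuclideanSpace ℝ (Fin n)) (r : ℝ), 0 < r →
      ENNReal.ofReal (C'⁻¹ * r ^ n) ≤ μ {y | d x y < r} ∧
      μ {y | d x y < r} ≤ ENNReal.ofReal (C' * r ^ n) := by
  have hC₀ : 0 < C := zero_lt_one.trans_le hC
  have hCd₀ : 0 < Cd := zero_lt_one.trans_le hCd
  have : Nonempty (Fin n) := ⟨⟨0, by omega⟩⟩
  have hatom : ∀ x, μ {x} = 0 := fun x =>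
    hμ ▸ withDensity_absolutelyContinuous _ _ (measure_singleton x)
  have huniv : μ univ = ∞ := measure_univ_eq_top_of_doubling ENNReal.ofReal_ne_top hdoub
    fun h => (hpos 0 1 one_pos).ne' (by simp [h])
  refine ⟨C * Cd, one_le_mul_of_one_le_of_one_le hC hCd, fun x r hr => ?_⟩
  have hball : ∃ R > 0, μ (ball x R) ≠ ∞ := ⟨1, one_pos, (hfin x 1 one_pos).ne⟩
  obtain ⟨T₁, hT₁, hT₁_below, hT₁_above⟩ := exists_radius_threshold_measure_ball (hatom x) hball
    huniv (A := ENNReal.ofReal (r ^ n / C)) (by positivity) ENNReal.ofReal_ne_top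
  obtain ⟨T₂, hT₂, hT₂_below, hT₂_above⟩ := exists_radius_threshold_measure_ball (hatom x) hball
    huniv (A := ENNReal.ofReal (C * r ^ n)) (by positivity) ENNReal.ofReal_ne_top
  constructor
  · rw [← ENNReal.mul_le_mul_iff_right (ENNReal.ofReal_pos.2 hCd₀).ne' ENNReal.ofReal_ne_top,
      ← ENNReal.ofReal_mul hCd₀.le]
    calc ENNReal.ofReal (Cd * ((C * Cd)⁻¹ * r ^ n)) = ENNReal.ofReal (r ^ n / C) := by
          congr 1; field_simp
      _ ≤ μ (ball x (2 * T₁)) := hT₁_above _ (by linarith)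
      _ ≤ ENNReal.ofReal Cd * μ (ball x T₁) := hdoub x T₁ hT₁
      _ ≤ ENNReal.ofReal Cd * μ {y | d x y < r} := by
          gcongr
          exact ball_subset_setOf_lt_of_measure_ball_lt hC₀ hr (fun y => (hcomp x y).2) hT₁_below
  · have hsub := setOf_lt_subset_closedBall_of_le_measure_ball (by omega) hC₀ hT₂.le (hd_pos x)
      (fun ρ hρ => (hfin x ρ hρ).ne) (fun y => (hcomp x y).1) hT₂_above
    calc μ {y | d x y < r} ≤ μ (ball x (2 * (3 / 4 * T₂))) :=
          measure_mono (hsub.trans (closedBall_subset_ball (by linarith)))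
      _ ≤ ENNReal.ofReal Cd * μ (ball x (3 / 4 * T₂)) := hdoub x _ (by positivity)
      _ ≤ ENNReal.ofReal Cd * ENNReal.ofReal (C * r ^ n) := by
          gcongr; exact (hT₂_below _ (by linarith)).le
      _ = ENNReal.ofReal (C * Cd * r ^ n) := by
          rw [← ENNReal.ofReal_mul hCd₀.le]; ring_nf

/-- Ahlfors n-regularity of `(ℝⁿ, d, μ)` when `μ = ω dLⁿ` is doubling and the metric
`d` satisfies `d(x,y)ⁿ ≈ μ(B(x,|x-y|))`: there is `C' ≥ 1` (depending only on `n` and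
the comparability constant `C`) with `C'⁻¹ rⁿ ≤ μ(B^d(x,r)) ≤ C' rⁿ` for all `x, r > 0`. -/
theorem ahlfors_regular_of_strongAinfty
    (n : ℕ) (hn : 2 ≤ n)
    (ω : EuclideanSpace ℝ (Fin n) → ℝ) (hω : ∀ x, 0 < ω x)
    (hωloc : LocallyIntegrable ω volume)
    (μ : Measure (EuclideanSpace ℝ (Fin n)))
    (hμ : μ = volume.withDensity fun x => ENNReal.ofReal (ω x))
    (Cd : ℝ) (hCd : 1 ≤ Cd)
    (hdoub : ∀ (x : EuclideanSpace ℝ (Fin n)) (r : ℝ), 0 < r →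
      μ (ball x (2 * r)) ≤ ENNReal.ofReal Cd * μ (ball x r))
    (hpos : ∀ (x : EuclideanSpace ℝ (Fin n)) (r : ℝ), 0 < r → 0 < μ (ball x r))
    (hfin : ∀ (x : EuclideanSpace ℝ (Fin n)) (r : ℝ), 0 < r → μ (ball x r) < ⊤)
    (d : EuclideanSpace ℝ (Fin n) → EuclideanSpace ℝ (Fin n) → ℝ)
    (hd_self : ∀ x, d x x = 0)
    (hd_pos : ∀ x y, x ≠ y → 0 < d x y)
    (hd_symm : ∀ x y, d x y = d y x)
    (hd_tri : ∀ x y z, d x z ≤ d x y + d y z)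
    (hd_top : ∀ (x : EuclideanSpace ℝ (Fin n)), ∀ ε : ℝ, 0 < ε →
      (∃ δ > 0, ∀ y, dist x y < δ → d x y < ε) ∧
      (∃ δ > 0, ∀ y, d x y < δ → dist x y < ε))
    (C : ℝ) (hC : 1 ≤ C)
    (hcomp : ∀ x y : EuclideanSpace ℝ (Fin n),
      C⁻¹ * (μ (ball x (dist x y))).toReal ≤ d x y ^ n ∧
      d x y ^ n ≤ C * (μ (ball x (dist x y))).toReal) :
    ∃ C' : ℝ, 1 ≤ C' ∧ ∀ (x : EuclideanSpace ℝ (Fin n)) (r : ℝ), 0 < r →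
      ENNReal.ofReal (C'⁻¹ * r ^ n) ≤ μ {y | d x y < r} ∧
      μ {y | d x y < r} ≤ ENNReal.ofReal (C' * r ^ n) :=
  ahlfors_regular_of_strongAinfty_general n hn ω μ hμ Cd hCd hdoub hpos hfin d hd_pos C hC hcomp
end

section
/- There is a constant C' ≥ 1, depending only on n, the doubling constant C_d, and the constant C in the comparability hypothesis between d and μ, such that for every x ∈ ℝⁿ and every r > 0 there exists a positive real number λ (depending on x and r) with B(x, λ r) ⊆ B^d(x, r) ⊆ B(x, C' λ r). -/
open MeasureTheory Metric
open scoped ENNReal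

/-!
Doubling, together with a point `z` at distance `2t` from `x`, gives reverse doubling:
`μ B(x,t) ≤ C_d² μ B(z,t)` and `B(x,t)`, `B(z,t)` are disjoint in `B(x,4t)`, so
`μ B(x,4t) ≥ (1 + C_d⁻²) μ B(x,t)` and `t ↦ μ B(x,t)` grows geometrically.
A supremum argument gives `t` with `C μ B(x,t) < rⁿ ≤ C μ B(x,2t)`. The upper comparison
`dⁿ ≤ C μ` yields `B(x,t) ⊆ B^d(x,r)`. For `y ∈ B^d(x,r)` the lower comparison gives
`μ B(x,|x-y|) < C rⁿ ≤ C² μ B(x,2t)`, and geometric growth turns this into `|x-y| < 2·4ᵏ t`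
as soon as `(1 + C_d⁻²)ᵏ ≥ C²`.
-/

section Growth

variable {f : ℝ → ℝ} {a q L : ℝ}

theorem pow_mul_le_apply_pow_mul (hq : 0 ≤ q) (ha : 0 < a)
    (hgrow : ∀ t, 0 < t → q * f t ≤ f (a * t)) (k : ℕ) {t : ℝ} (ht : 0 < t) :
    q ^ k * f t ≤ f (a ^ k * t) := by
  induction k with
  | zero => simp
  | succ k ih =>
    calc q ^ (k + 1) * f t = q * (q ^ k * f t) := by ring
      _ ≤ q * f (a ^ k * t) := mul_le_mul_of_nonneg_left ih hq
      _ ≤ f (a * (a ^ k * t)) := hgrow _ (by positivity)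
      _ = f (a ^ (k + 1) * t) := by ring_nf

theorem exists_pos_apply_lt (hq : 1 < q) (ha : 0 < a)
    (hgrow : ∀ t, 0 < t → q * f t ≤ f (a * t)) (hL : 0 < L) : ∃ t, 0 < t ∧ f t < L := by
  obtain ⟨k, hk⟩ := pow_unbounded_of_one_lt (f 1 / L) hq
  have hqk : 0 < q ^ k := by positivity
  refine ⟨(a ^ k)⁻¹, by positivity, lt_of_mul_lt_mul_left ?_ hqk.le⟩
  calc q ^ k * f (a ^ k)⁻¹ ≤ f (a ^ k * (a ^ k)⁻¹) :=
        pow_mul_le_apply_pow_mul (by linarith) ha hgrow k (by positivity)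
    _ = f 1 := by rw [mul_inv_cancel₀ (by positivity)]
    _ < q ^ k * L := by rwa [div_lt_iff₀ hL] at hk

theorem bddAbove_setOf_apply_lt (hmono : Monotone f) (hpos : ∀ t, 0 < t → 0 < f t)
    (hq : 1 < q) (ha : 0 < a) (hgrow : ∀ t, 0 < t → q * f t ≤ f (a * t)) (L : ℝ) :
    BddAbove {t | 0 < t ∧ f t < L} := by
  obtain ⟨k, hk⟩ := pow_unbounded_of_one_lt (L / f 1) hq
  have hLT : L < f (a ^ k * 1) := by
    calc L < q ^ k * f 1 := by rwa [div_lt_iff₀ (hpos 1 one_pos)] at hk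
      _ ≤ f (a ^ k * 1) := pow_mul_le_apply_pow_mul (by linarith) ha hgrow k one_pos
  refine ⟨a ^ k * 1, fun t ht => ?_⟩
  by_contra! hTt
  linarith [hmono hTt.le, ht.2]

theorem exists_apply_lt_le_apply_two_mul (hbdd : BddAbove {t | 0 < t ∧ f t < L})
    (hne : ∃ t, 0 < t ∧ f t < L) : ∃ t, 0 < t ∧ f t < L ∧ L ≤ f (2 * t) := by
  set S := {t | 0 < t ∧ f t < L}
  obtain ⟨t₀, ht₀S⟩ := hne
  have hsup : 0 < sSup S := ht₀S.1.trans_le (le_csSup hbdd ht₀S)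
  obtain ⟨t, htS, hlt⟩ := exists_lt_of_lt_csSup ⟨t₀, ht₀S⟩ (half_lt_self hsup)
  refine ⟨t, htS.1, htS.2, ?_⟩
  by_contra! h2t
  have := le_csSup hbdd (⟨by linarith [htS.1], h2t⟩ : 2 * t ∈ S)
  linarith

theorem lt_two_mul_pow_mul_of_apply_lt (hmono : Monotone f) (hq : 0 ≤ q) (ha : 0 < a)
    (hgrow : ∀ t, 0 < t → q * f t ≤ f (a * t)) {K : ℝ} {k : ℕ} (hK : K ≤ q ^ k)
    (hL : 0 ≤ L) {t : ℝ} (ht : 0 < t) (h2t : L ≤ f (2 * t)) {s : ℝ} (hs : f s < K * L) :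
    s < 2 * a ^ k * t := by
  by_contra! hst
  have hak : 0 < a ^ k := by positivity
  have hs' : 2 * t ≤ s / a ^ k := by rw [le_div_iff₀ hak]; linarith
  have hgrown := pow_mul_le_apply_pow_mul hq ha hgrow k (t := s / a ^ k) (by linarith)
  rw [mul_div_cancel₀ s hak.ne'] at hgrown
  refine hs.not_ge ?_
  calc K * L ≤ q ^ k * f (2 * t) := mul_le_mul hK h2t hL (pow_nonneg hq k)
    _ ≤ q ^ k * f (s / a ^ k) := mul_le_mul_of_nonneg_left (hmono hs') (pow_nonneg hq k)
    _ ≤ f s := hgrown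

theorem exists_radius_of_growth (hmono : Monotone f) (hpos : ∀ t, 0 < t → 0 < f t)
    (hq : 1 < q) (ha : 0 < a) (hgrow : ∀ t, 0 < t → q * f t ≤ f (a * t))
    {K : ℝ} {k : ℕ} (hK : K ≤ q ^ k) (hL : 0 < L) :
    ∃ t, 0 < t ∧ f t < L ∧ ∀ s, f s < K * L → s < 2 * a ^ k * t := by
  obtain ⟨t, ht, hlt, h2t⟩ := exists_apply_lt_le_apply_two_mul
    (bddAbove_setOf_apply_lt hmono hpos hq ha hgrow L) (exists_pos_apply_lt hq ha hgrow hL)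
  exact ⟨t, ht, hlt, fun s hs =>
    lt_two_mul_pow_mul_of_apply_lt hmono (by linarith) ha hgrow hK hL.le ht h2t hs⟩

end Growth

section ReverseDoubling

variable {E : Type*} [NormedAddCommGroup E] [NormedSpace ℝ E] [Nontrivial E]
  [MeasurableSpace E] [OpensMeasurableSpace E] {μ : Measure E} {D : ℝ≥0∞}

theorem measure_ball_four_mul_ge (hD0 : D ≠ 0) (hD : D ≠ ∞)
    (hdoub : ∀ x r, 0 < r → μ (ball x (2 * r)) ≤ D * μ (ball x r)) (x : E) {t : ℝ}
    (ht : 0 < t) : (1 + (D ^ 2)⁻¹) * μ (ball x t) ≤ μ (ball x (4 * t)) := by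
  obtain ⟨v, hv⟩ := exists_norm_eq E (show 0 ≤ 2 * t by positivity)
  set z := x + v
  have hxz : dist x z = 2 * t := by simp [z, dist_eq_norm, hv]
  have hball : μ (ball x t) ≤ D ^ 2 * μ (ball z t) :=
    calc μ (ball x t) ≤ μ (ball z (2 * (2 * t))) :=
          measure_mono (ball_subset_ball' (by rw [hxz]; linarith))
      _ ≤ D * (D * μ (ball z t)) :=
          (hdoub z _ (by positivity)).trans (by gcongr; exact hdoub z t ht)
      _ = D ^ 2 * μ (ball z t) := by ring
  have hunion : μ (ball x t) + μ (ball z t) ≤ μ (ball x (4 * t)) := by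
    rw [← measure_union (ball_disjoint_ball (by rw [hxz]; linarith)) measurableSet_ball]
    exact measure_mono (Set.union_subset (ball_subset_ball (by linarith))
      (ball_subset_ball' (by rw [dist_comm, hxz]; linarith)))
  calc (1 + (D ^ 2)⁻¹) * μ (ball x t) = μ (ball x t) + (D ^ 2)⁻¹ * μ (ball x t) := by ring
    _ ≤ μ (ball x t) + μ (ball z t) := by
        gcongr
        exact (ENNReal.inv_mul_le_iff (pow_ne_zero 2 hD0) (ENNReal.pow_ne_top hD)).2 hball
    _ ≤ μ (ball x (4 * t)) := hunion

theorem toReal_measure_ball_four_mul_ge {D : ℝ} (hD : 0 < D)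
    (hdoub : ∀ x r, 0 < r → μ (ball x (2 * r)) ≤ ENNReal.ofReal D * μ (ball x r))
    (hfin : ∀ x r, 0 < r → μ (ball x r) < ∞) (x : E) (t : ℝ) (ht : 0 < t) :
    (1 + (D ^ 2)⁻¹) * (μ (ball x t)).toReal ≤ (μ (ball x (4 * t))).toReal := by
  have hD0 : ENNReal.ofReal D ≠ 0 := ENNReal.ofReal_ne_zero_iff.2 hD
  have hq : (1 + (ENNReal.ofReal D ^ 2)⁻¹).toReal = 1 + (D ^ 2)⁻¹ := by
    rw [ENNReal.toReal_add ENNReal.one_ne_top (ENNReal.inv_ne_top.2 (pow_ne_zero 2 hD0)),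
      ENNReal.toReal_inv, ENNReal.toReal_pow, ENNReal.toReal_ofReal hD.le, ENNReal.toReal_one]
  rw [← hq, ← ENNReal.toReal_mul]
  exact ENNReal.toReal_mono (hfin x _ (by positivity)).ne
    (measure_ball_four_mul_ge hD0 ENNReal.ofReal_ne_top hdoub x ht)

end ReverseDoubling

section BallComparison

variable {X : Type*} [PseudoMetricSpace X] [MeasurableSpace X] {μ : Measure X}
  {d : X → X → ℝ} {x : X} {n : ℕ} {C r : ℝ}

theorem monotone_toReal_measure_ball (hfin : ∀ r, 0 < r → μ (ball x r) < ∞) :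
    Monotone fun t => (μ (ball x t)).toReal := by
  intro s t hst
  rcases le_or_gt t 0 with ht | ht
  · simp [ball_eq_empty.2 ht, ball_eq_empty.2 (hst.trans ht)]
  · exact ENNReal.toReal_mono (hfin t ht).ne (measure_mono (ball_subset_ball hst))

theorem ball_subset_setOf_lt (hr : 0 ≤ r) (hC : 0 ≤ C)
    (hfin : ∀ r, 0 < r → μ (ball x r) < ∞)
    (hupper : ∀ y, d x y ^ n ≤ C * (μ (ball x (dist x y))).toReal) {t : ℝ}
    (ht : C * (μ (ball x t)).toReal < r ^ n) : ball x t ⊆ {y | d x y < r} := by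
  intro y hy
  show d x y < r
  by_contra! hry
  have hdist : dist x y ≤ t := (mem_ball'.1 hy).le
  have := mul_le_mul_of_nonneg_left (monotone_toReal_measure_ball hfin hdist) hC
  linarith [pow_le_pow_left₀ hr hry n, hupper y]

theorem setOf_lt_subset_ball (hn : n ≠ 0) (hr : 0 < r) (hC : 0 < C)
    (hd_pos : ∀ y, x ≠ y → 0 < d x y)
    (hlower : ∀ y, C⁻¹ * (μ (ball x (dist x y))).toReal ≤ d x y ^ n) {R : ℝ}
    (hR : ∀ s, (μ (ball x s)).toReal < C * r ^ n → s < R) : {y | d x y < r} ⊆ ball x R := by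
  intro y hy
  rw [mem_ball']
  apply hR
  rcases eq_or_ne x y with rfl | hxy
  · simp [hC, hr]
  · calc (μ (ball x (dist x y))).toReal ≤ C * d x y ^ n := (inv_mul_le_iff₀ hC).1 (hlower y)
      _ < C * r ^ n := by gcongr; exacts [(hd_pos y hxy).le, hy]

end BallComparison

theorem metric_ball_between_euclidean_balls_general
    (n : ℕ) (hn : 2 ≤ n)
    (μ : Measure (EuclideanSpace ℝ (Fin n)))
    (Cd : ℝ) (hCd : 1 ≤ Cd)
    (hdoub : ∀ (x : EuclideanSpace ℝ (Fin n)) (r : ℝ), 0 < r →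
      μ (ball x (2 * r)) ≤ ENNReal.ofReal Cd * μ (ball x r))
    (hpos : ∀ (x : EuclideanSpace ℝ (Fin n)) (r : ℝ), 0 < r → 0 < μ (ball x r))
    (hfin : ∀ (x : EuclideanSpace ℝ (Fin n)) (r : ℝ), 0 < r → μ (ball x r) < ⊤)
    (d : EuclideanSpace ℝ (Fin n) → EuclideanSpace ℝ (Fin n) → ℝ)
    (hd_pos : ∀ x y, x ≠ y → 0 < d x y)
    (C : ℝ) (hC : 1 ≤ C)
    (hcomp : ∀ x y : EuclideanSpace ℝ (Fin n),
      C⁻¹ * (μ (ball x (dist x y))).toReal ≤ d x y ^ n ∧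
      d x y ^ n ≤ C * (μ (ball x (dist x y))).toReal) :
    ∃ C' : ℝ, 1 ≤ C' ∧ ∀ (x : EuclideanSpace ℝ (Fin n)) (r : ℝ), 0 < r →
      ∃ lam : ℝ, 0 < lam ∧
        ball x (lam * r) ⊆ {y | d x y < r} ∧
        {y | d x y < r} ⊆ ball x (C' * lam * r) := by
  have : Nonempty (Fin n) := ⟨⟨0, by omega⟩⟩
  have hC0 : 0 < C := by linarith
  have hq : 1 < 1 + (Cd ^ 2)⁻¹ := by simp; positivity
  obtain ⟨k, hk⟩ := pow_unbounded_of_one_lt (C ^ 2) hq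
  refine ⟨2 * 4 ^ k, by linarith [one_le_pow₀ (M₀ := ℝ) (a := 4) (by norm_num) (n := k)],
    fun x r hr => ?_⟩
  obtain ⟨t, ht, hlt, hR⟩ := exists_radius_of_growth (L := r ^ n / C)
    (monotone_toReal_measure_ball (hfin x))
    (fun t ht => ENNReal.toReal_pos (hpos x t ht).ne' (hfin x t ht).ne) hq four_pos
    (toReal_measure_ball_four_mul_ge (by linarith) hdoub hfin x) hk.le (by positivity)
  refine ⟨t / r, by positivity, ?_, ?_⟩
  · rw [div_mul_cancel₀ _ hr.ne']
    exact ball_subset_setOf_lt hr.le hC0.le (hfin x) (fun y => (hcomp x y).2)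
      (by rwa [lt_div_iff₀' hC0] at hlt)
  · rw [mul_assoc, div_mul_cancel₀ _ hr.ne']
    refine setOf_lt_subset_ball (by omega) hr hC0 (hd_pos x) (fun y => (hcomp x y).1)
      fun s hs => hR s ?_
    rwa [sq, mul_assoc, mul_div_cancel₀ _ hC0.ne']

/-- Comparison of metric balls with Euclidean balls (Lemma 6.6, first part): there is
`C' ≥ 1` depending only on `n`, `C_d` and `C` such that for every `x` and `r > 0` there
is `λ > 0` with `B(x, λ r) ⊆ B^d(x, r) ⊆ B(x, C' λ r)`. -/
theorem metric_ball_between_euclidean_balls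
    (n : ℕ) (hn : 2 ≤ n)
    (ω : EuclideanSpace ℝ (Fin n) → ℝ) (hω : ∀ x, 0 < ω x)
    (hωloc : LocallyIntegrable ω volume)
    (μ : Measure (EuclideanSpace ℝ (Fin n)))
    (hμ : μ = volume.withDensity fun x => ENNReal.ofReal (ω x))
    (Cd : ℝ) (hCd : 1 ≤ Cd)
    (hdoub : ∀ (x : EuclideanSpace ℝ (Fin n)) (r : ℝ), 0 < r →
      μ (ball x (2 * r)) ≤ ENNReal.ofReal Cd * μ (ball x r))
    (hpos : ∀ (x : EuclideanSpace ℝ (Fin n)) (r : ℝ), 0 < r → 0 < μ (ball x r))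
    (hfin : ∀ (x : EuclideanSpace ℝ (Fin n)) (r : ℝ), 0 < r → μ (ball x r) < ⊤)
    (d : EuclideanSpace ℝ (Fin n) → EuclideanSpace ℝ (Fin n) → ℝ)
    (hd_self : ∀ x, d x x = 0)
    (hd_pos : ∀ x y, x ≠ y → 0 < d x y)
    (hd_symm : ∀ x y, d x y = d y x)
    (hd_tri : ∀ x y z, d x z ≤ d x y + d y z)
    (hd_top : ∀ (x : EuclideanSpace ℝ (Fin n)), ∀ ε : ℝ, 0 < ε →
      (∃ δ > 0, ∀ y, dist x y < δ → d x y < ε) ∧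
      (∃ δ > 0, ∀ y, d x y < δ → dist x y < ε))
    (C : ℝ) (hC : 1 ≤ C)
    (hcomp : ∀ x y : EuclideanSpace ℝ (Fin n),
      C⁻¹ * (μ (ball x (dist x y))).toReal ≤ d x y ^ n ∧
      d x y ^ n ≤ C * (μ (ball x (dist x y))).toReal) :
    ∃ C' : ℝ, 1 ≤ C' ∧ ∀ (x : EuclideanSpace ℝ (Fin n)) (r : ℝ), 0 < r →
      ∃ lam : ℝ, 0 < lam ∧
        ball x (lam * r) ⊆ {y | d x y < r} ∧
        {y | d x y < r} ⊆ ball x (C' * lam * r) :=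
  metric_ball_between_euclidean_balls_general n hn μ Cd hCd hdoub hpos hfin d hd_pos C hC hcomp
end

section
/- There is a constant C' ≥ 1, depending only on n, the doubling constant C_d, and the constant C in the comparability hypothesis between d and μ, such that for every x ∈ ℝⁿ and every r > 0 there exists a positive real number τ (depending on x and r) with B^d(x, τ r) ⊆ B(x, r) ⊆ B^d(x, C' τ r). -/
open MeasureTheory Metric

/-!
If `d(x,y)ⁿ` is comparable to `μ(B(x,|x-y|))` with constant `C`, take `τ r = t` with
`C tⁿ = μ(B(x,r))`. A point with `d(x,y) < t` cannot lie outside `B(x,r)`, since then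
`d(x,y)ⁿ ≥ C⁻¹ μ(B(x,|x-y|)) ≥ C⁻¹ μ(B(x,r)) = tⁿ`; a point of `B(x,r)` has
`d(x,y)ⁿ ≤ C μ(B(x,r)) = C² tⁿ < (2C² t)ⁿ`.
-/

section ComparableGauge

variable {X : Type*} [PseudoMetricSpace X] [MeasurableSpace X] {μ : Measure X}
  {d : X → X → ℝ} {n : ℕ} {C : ℝ} {x : X} {r : ℝ}

theorem setOf_lt_subset_ball_of_le_pow (hr : 0 < r)
    (hd_pos : ∀ y, x ≠ y → 0 < d x y)
    (hlow : ∀ y, C⁻¹ * (μ (ball x (dist x y))).toReal ≤ d x y ^ n)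
    (hfin : ∀ s, 0 < s → μ (ball x s) < ⊤) (hC : 0 < C) {t : ℝ}
    (ht : C * t ^ n ≤ (μ (ball x r)).toReal) (hn : n ≠ 0) :
    {y | d x y < t} ⊆ ball x r := by
  intro y hy
  rw [mem_ball, dist_comm]
  by_contra! hle
  have hxy : x ≠ y := fun h => by simp [h] at hle; linarith
  have hmono : (μ (ball x r)).toReal ≤ (μ (ball x (dist x y))).toReal :=
    ENNReal.toReal_mono (hfin _ (hr.trans_le hle)).ne (measure_mono (ball_subset_ball hle))
  have hpow : d x y ^ n < t ^ n := pow_lt_pow_left₀ hy (hd_pos y hxy).le hn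
  have hup : (μ (ball x (dist x y))).toReal ≤ C * d x y ^ n := by
    rw [← inv_mul_le_iff₀ hC]; exact hlow y
  exact lt_irrefl _ <| calc
    C * t ^ n ≤ (μ (ball x r)).toReal := ht
    _ ≤ (μ (ball x (dist x y))).toReal := hmono
    _ ≤ C * d x y ^ n := hup
    _ < C * t ^ n := mul_lt_mul_of_pos_left hpow hC

theorem ball_subset_setOf_lt_of_pow_lt
    (hup : ∀ y, d x y ^ n ≤ C * (μ (ball x (dist x y))).toReal)
    (hfin : μ (ball x r) ≠ ⊤) (hC : 0 ≤ C) {s : ℝ} (hs : 0 ≤ s)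
    (hsn : C * (μ (ball x r)).toReal < s ^ n) :
    ball x r ⊆ {y | d x y < s} := by
  intro y hy
  have hdr : dist x y ≤ r := by rw [dist_comm]; exact (mem_ball.1 hy).le
  have hmono : (μ (ball x (dist x y))).toReal ≤ (μ (ball x r)).toReal :=
    ENNReal.toReal_mono hfin (measure_mono (ball_subset_ball hdr))
  refine lt_of_pow_lt_pow_left₀ n hs ?_
  calc d x y ^ n ≤ C * (μ (ball x (dist x y))).toReal := hup y
    _ ≤ C * (μ (ball x r)).toReal := mul_le_mul_of_nonneg_left hmono hC
    _ < s ^ n := hsn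

end ComparableGauge

theorem mul_mul_pow_lt_two_mul_sq_mul_pow {C t : ℝ} {n : ℕ} (hC : 1 ≤ C) (ht : 0 < t)
    (hn : n ≠ 0) : C * (C * t ^ n) < (2 * C ^ 2 * t) ^ n := by
  have hC0 : 0 < C := one_pos.trans_le hC
  calc C * (C * t ^ n) = C ^ 2 * t ^ n := by ring
    _ < 2 * (C ^ 2 * t ^ n) := lt_two_mul_self (by positivity)
    _ ≤ (2 * C ^ 2) ^ n * t ^ n := by
      rw [← mul_assoc]
      exact mul_le_mul_of_nonneg_right (le_self_pow₀ (by nlinarith) hn) (by positivity)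
    _ = (2 * C ^ 2 * t) ^ n := (mul_pow _ _ _).symm

theorem euclidean_ball_between_metric_balls_general
    (n : ℕ) (hn : 2 ≤ n)
    (μ : Measure (EuclideanSpace ℝ (Fin n)))
    (hpos : ∀ (x : EuclideanSpace ℝ (Fin n)) (r : ℝ), 0 < r → 0 < μ (ball x r))
    (hfin : ∀ (x : EuclideanSpace ℝ (Fin n)) (r : ℝ), 0 < r → μ (ball x r) < ⊤)
    (d : EuclideanSpace ℝ (Fin n) → EuclideanSpace ℝ (Fin n) → ℝ)
    (hd_pos : ∀ x y, x ≠ y → 0 < d x y)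
    (C : ℝ) (hC : 1 ≤ C)
    (hcomp : ∀ x y : EuclideanSpace ℝ (Fin n),
      C⁻¹ * (μ (ball x (dist x y))).toReal ≤ d x y ^ n ∧
      d x y ^ n ≤ C * (μ (ball x (dist x y))).toReal) :
    ∃ C' : ℝ, 1 ≤ C' ∧ ∀ (x : EuclideanSpace ℝ (Fin n)) (r : ℝ), 0 < r →
      ∃ τ : ℝ, 0 < τ ∧
        {y | d x y < τ * r} ⊆ ball x r ∧
        ball x r ⊆ {y | d x y < C' * τ * r} := by
  have hC0 : 0 < C := one_pos.trans_le hC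
  have hn0 : n ≠ 0 := by omega
  refine ⟨2 * C ^ 2, by nlinarith, fun x r hr => ?_⟩
  set m := (μ (ball x r)).toReal
  have hm : 0 < m := ENNReal.toReal_pos (hpos x r hr).ne' (hfin x r hr).ne
  set t := (m / C) ^ (n : ℝ)⁻¹
  have ht : 0 < t := by positivity
  have hCt : C * t ^ n = m := by
    rw [Real.rpow_inv_natCast_pow (by positivity) hn0]; field_simp
  refine ⟨t / r, by positivity, ?_, ?_⟩
  · rw [div_mul_cancel₀ t hr.ne']
    exact setOf_lt_subset_ball_of_le_pow hr (hd_pos x) (fun y => (hcomp x y).1)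
      (hfin x) hC0 hCt.le hn0
  · rw [mul_assoc, div_mul_cancel₀ t hr.ne']
    refine ball_subset_setOf_lt_of_pow_lt (fun y => (hcomp x y).2) (hfin x r hr).ne
      hC0.le (by positivity) ?_
    simpa only [hCt] using mul_mul_pow_lt_two_mul_sq_mul_pow hC ht hn0

/-- Comparison of Euclidean balls with metric balls (Lemma 6.6, second part): there is
`C' ≥ 1` depending only on `n`, `C_d` and `C` such that for every `x` and `r > 0` there
is `τ > 0` with `B^d(x, τ r) ⊆ B(x, r) ⊆ B^d(x, C' τ r)`. -/
theorem euclidean_ball_between_metric_balls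
    (n : ℕ) (hn : 2 ≤ n)
    (ω : EuclideanSpace ℝ (Fin n) → ℝ) (hω : ∀ x, 0 < ω x)
    (hωloc : LocallyIntegrable ω volume)
    (μ : Measure (EuclideanSpace ℝ (Fin n)))
    (hμ : μ = volume.withDensity fun x => ENNReal.ofReal (ω x))
    (Cd : ℝ) (hCd : 1 ≤ Cd)
    (hdoub : ∀ (x : EuclideanSpace ℝ (Fin n)) (r : ℝ), 0 < r →
      μ (ball x (2 * r)) ≤ ENNReal.ofReal Cd * μ (ball x r))
    (hpos : ∀ (x : EuclideanSpace ℝ (Fin n)) (r : ℝ), 0 < r → 0 < μ (ball x r))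
    (hfin : ∀ (x : EuclideanSpace ℝ (Fin n)) (r : ℝ), 0 < r → μ (ball x r) < ⊤)
    (d : EuclideanSpace ℝ (Fin n) → EuclideanSpace ℝ (Fin n) → ℝ)
    (hd_self : ∀ x, d x x = 0)
    (hd_pos : ∀ x y, x ≠ y → 0 < d x y)
    (hd_symm : ∀ x y, d x y = d y x)
    (hd_tri : ∀ x y z, d x z ≤ d x y + d y z)
    (hd_top : ∀ (x : EuclideanSpace ℝ (Fin n)), ∀ ε : ℝ, 0 < ε →
      (∃ δ > 0, ∀ y, dist x y < δ → d x y < ε) ∧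
      (∃ δ > 0, ∀ y, d x y < δ → dist x y < ε))
    (C : ℝ) (hC : 1 ≤ C)
    (hcomp : ∀ x y : EuclideanSpace ℝ (Fin n),
      C⁻¹ * (μ (ball x (dist x y))).toReal ≤ d x y ^ n ∧
      d x y ^ n ≤ C * (μ (ball x (dist x y))).toReal) :
    ∃ C' : ℝ, 1 ≤ C' ∧ ∀ (x : EuclideanSpace ℝ (Fin n)) (r : ℝ), 0 < r →
      ∃ τ : ℝ, 0 < τ ∧
        {y | d x y < τ * r} ⊆ ball x r ∧
        ball x r ⊆ {y | d x y < C' * τ * r} :=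
  euclidean_ball_between_metric_balls_general n hn μ hpos hfin d hd_pos C hC hcomp
end

section
/- There is a Lebesgue-null Borel set F ⊆ ℝⁿ and a constant C' ≥ 1, depending only on n and the constant C in the comparability hypothesis between d and μ, such that for every x ∈ ℝⁿ \ F: ω(x)^{1/n} ≤ C' · liminf_{y → x, y ≠ x} d(x,y)/|x−y|, and limsup_{y → x, y ≠ x} d(x,y)/|x−y| ≤ C' · ω(x)^{1/n}. In particular, at almost every point the lower and upper metric derivatives of d with respect to the Euclidean metric are comparable to ω^{1/n}. -/
open MeasureTheory Metric Filter
open scoped Topology ENNReal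

/-!
At a Lebesgue point `x` of `ω`, `μ(B(x,r)) = ∫_{B(x,r)} ω` lies between `ω(x)/2 · K rⁿ` and
`2ω(x) · K rⁿ` for small `r`, where `K` is the volume of the unit ball. Comparability of
`d(x,y)ⁿ` with `μ(B(x,|x-y|))` then pins `(d(x,y)/|x-y|)ⁿ` between `ω(x)/A` and `A ω(x)` for
`y` near `x`, with `A = 2C max(K, K⁻¹)`, and taking `n`-th roots bounds the lower and upper
metric derivatives. The exceptional set is a measurable null hull of the non-Lebesgue points.
-/

theorem ae_tendsto_average_closedBall {α F : Type*} [PseudoMetricSpace α] [MeasurableSpace α]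
    [SecondCountableTopology α] [BorelSpace α] {μ : Measure α} [IsLocallyFiniteMeasure μ]
    [IsUnifLocDoublingMeasure μ] [NormedAddCommGroup F] [NormedSpace ℝ F] [CompleteSpace F]
    {f : α → F} (hf : LocallyIntegrable f μ) :
    ∀ᵐ x ∂μ, Tendsto (fun r => ⨍ y in closedBall x r, f y ∂μ) (𝓝[>] 0) (𝓝 (f x)) := by
  filter_upwards [IsUnifLocDoublingMeasure.ae_tendsto_average μ hf 1] with x hx
  refine hx (fun _ => x) id tendsto_id ?_
  filter_upwards [self_mem_nhdsWithin] with r (hr : 0 < r)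
  simpa using hr.le

theorem tendsto_dist_left_nhdsNE {X : Type*} [MetricSpace X] (x : X) :
    Tendsto (dist x) (𝓝[≠] x) (𝓝[>] 0) := by
  refine tendsto_nhdsWithin_iff.2 ⟨?_, ?_⟩
  · exact tendsto_nhdsWithin_of_tendsto_nhds
      ((continuous_const (y := x)).dist continuous_id |>.tendsto' x 0 (dist_self x))
  · filter_upwards [self_mem_nhdsWithin] with y (hy : y ≠ x)
    exact dist_pos.2 hy.symm

section AddHaar

variable {E : Type*} [NormedAddCommGroup E] [NormedSpace ℝ E] [FiniteDimensional ℝ E]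
  [MeasurableSpace E] [BorelSpace E] {μ : Measure E} [μ.IsAddHaarMeasure] [Nontrivial E]

theorem ball_ae_eq_closedBall (x : E) (r : ℝ) : ball x r =ᵐ[μ] closedBall x r :=
  ae_eq_of_subset_of_measure_ge ball_subset_closedBall
    (Measure.addHaar_closedBall_eq_addHaar_ball μ x r).le measurableSet_ball.nullMeasurableSet
    measure_closedBall_lt_top.ne

theorem toReal_withDensity_ball {f : E → ℝ} (hf : LocallyIntegrable f μ) (hf0 : 0 ≤ f)
    (x : E) (r : ℝ) :
    ((μ.withDensity fun y => ENNReal.ofReal (f y)) (ball x r)).toReal =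
      μ.real (closedBall x r) * ⨍ y in closedBall x r, f y ∂μ := by
  have hint : IntegrableOn f (ball x r) μ :=
    (hf.integrableOn_isCompact (isCompact_closedBall x r)).mono_set ball_subset_closedBall
  rw [withDensity_apply _ measurableSet_ball,
    ← ofReal_integral_eq_lintegral_ofReal hint (.of_forall hf0),
    ENNReal.toReal_ofReal (setIntegral_nonneg measurableSet_ball fun y _ => hf0 y),
    setIntegral_congr_set (ball_ae_eq_closedBall x r),
    ← measure_smul_setAverage _ measure_closedBall_lt_top.ne, smul_eq_mul]

theorem eventually_mul_pow_le_toReal_withDensity_ball_le {f : E → ℝ}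
    (hf : LocallyIntegrable f μ) (hf0 : 0 ≤ f) {x : E}
    (hx : Tendsto (fun r => ⨍ y in closedBall x r, f y ∂μ) (𝓝[>] 0) (𝓝 (f x)))
    {a b : ℝ} (ha : a < f x) (hb : f x < b) :
    ∀ᶠ r in 𝓝[>] 0,
      a * μ.real (ball 0 1) * r ^ Module.finrank ℝ E ≤
        ((μ.withDensity fun y => ENNReal.ofReal (f y)) (ball x r)).toReal ∧
      ((μ.withDensity fun y => ENNReal.ofReal (f y)) (ball x r)).toReal ≤
        b * μ.real (ball 0 1) * r ^ Module.finrank ℝ E := by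
  filter_upwards [hx (Ioo_mem_nhds ha hb), self_mem_nhdsWithin] with r ⟨hra, hrb⟩ (hr : 0 < r)
  have hvol : 0 ≤ r ^ Module.finrank ℝ E * μ.real (ball 0 1) := by positivity
  rw [toReal_withDensity_ball hf hf0, Measure.addHaar_real_closedBall μ x hr.le]
  constructor <;> nlinarith

end AddHaar

theorem eventually_le_pow_div_dist_le {X : Type*} [MetricSpace X] {x : X} {d : X → X → ℝ}
    {m : ℝ → ℝ} {n : ℕ} {C a b : ℝ} (hC : 0 ≤ C)
    (hcomp : ∀ y, C⁻¹ * m (dist x y) ≤ d x y ^ n ∧ d x y ^ n ≤ C * m (dist x y))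
    (hm : ∀ᶠ r in 𝓝[>] 0, a * r ^ n ≤ m r ∧ m r ≤ b * r ^ n) :
    ∀ᶠ y in 𝓝[≠] x, C⁻¹ * a ≤ (d x y / dist x y) ^ n ∧ (d x y / dist x y) ^ n ≤ C * b := by
  filter_upwards [(tendsto_dist_left_nhdsNE x).eventually hm, self_mem_nhdsWithin]
    with y ⟨hma, hmb⟩ (hy : y ≠ x)
  have hρ : 0 < dist x y ^ n := pow_pos (dist_pos.2 hy.symm) n
  rw [div_pow, le_div_iff₀ hρ, div_le_iff₀ hρ]
  constructor
  · calc C⁻¹ * a * dist x y ^ n = C⁻¹ * (a * dist x y ^ n) := mul_assoc ..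
      _ ≤ C⁻¹ * m (dist x y) := by gcongr
      _ ≤ d x y ^ n := (hcomp y).1
  · calc d x y ^ n ≤ C * m (dist x y) := (hcomp y).2
      _ ≤ C * (b * dist x y ^ n) := by gcongr
      _ = C * b * dist x y ^ n := (mul_assoc ..).symm

theorem rpow_le_mul_liminf_and_limsup_le_mul_rpow {α : Type*} {l : Filter α} [l.NeBot]
    {g : α → ℝ} {n : ℕ} (hn : n ≠ 0) {w A : ℝ} (hw : 0 ≤ w) (hA : 0 < A)
    (hg : ∀ᶠ y in l, 0 ≤ g y ∧ w / A ≤ g y ^ n ∧ g y ^ n ≤ A * w) :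
    w ^ ((1 : ℝ) / n) ≤ A ^ ((1 : ℝ) / n) * liminf g l ∧
      limsup g l ≤ A ^ ((1 : ℝ) / n) * w ^ ((1 : ℝ) / n) := by
  have hn' : (0 : ℝ) < n := by positivity
  have hlo : ∀ᶠ y in l, (w / A) ^ ((1 : ℝ) / n) ≤ g y := by
    filter_upwards [hg] with y ⟨hg0, hgw, _⟩
    rwa [one_div, Real.rpow_inv_le_iff_of_pos (by positivity) hg0 hn', Real.rpow_natCast]
  have hhi : ∀ᶠ y in l, g y ≤ (A * w) ^ ((1 : ℝ) / n) := by
    filter_upwards [hg] with y ⟨hg0, _, hgw⟩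
    rwa [one_div, Real.le_rpow_inv_iff_of_pos hg0 (by positivity) hn', Real.rpow_natCast]
  constructor
  · calc w ^ ((1 : ℝ) / n) = A ^ ((1 : ℝ) / n) * (w / A) ^ ((1 : ℝ) / n) := by
          rw [← Real.mul_rpow hA.le (by positivity), mul_div_cancel₀ _ hA.ne']
      _ ≤ A ^ ((1 : ℝ) / n) * liminf g l := by
          gcongr
          exact le_liminf_of_le (isCoboundedUnder_ge_of_eventually_le l hhi) hlo
  · calc limsup g l ≤ (A * w) ^ ((1 : ℝ) / n) :=
          limsup_le_of_le (isCoboundedUnder_le_of_eventually_le l hlo) hhi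
      _ = A ^ ((1 : ℝ) / n) * w ^ ((1 : ℝ) / n) := Real.mul_rpow hA.le hw

section ComparabilityConstant

variable {C K w : ℝ}

theorem one_le_two_mul_max_inv (hC : 1 ≤ C) (hK : 0 < K) : 1 ≤ 2 * C * max K K⁻¹ := by
  have hmax : 1 ≤ max K K⁻¹ := by
    rcases le_total 1 K with h | h
    · exact le_max_of_le_left h
    · exact le_max_of_le_right ((one_le_inv₀ hK).2 h)
  nlinarith

theorem div_two_mul_max_inv_le (hC : 0 < C) (hK : 0 < K) (hw : 0 ≤ w) :
    w / (2 * C * max K K⁻¹) ≤ C⁻¹ * (w / 2 * K) := by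
  have hKmax : 1 ≤ K * max K K⁻¹ :=
    (mul_inv_cancel₀ hK.ne').symm.le.trans (by gcongr; exact le_max_right _ _)
  rw [div_le_iff₀ (by positivity)]
  calc w ≤ w * (K * max K K⁻¹) := le_mul_of_one_le_right hw hKmax
    _ = C⁻¹ * (w / 2 * K) * (2 * C * max K K⁻¹) := by field_simp

theorem mul_le_two_mul_max_inv_mul (hC : 0 ≤ C) (hw : 0 ≤ w) :
    C * (2 * w * K) ≤ 2 * C * max K K⁻¹ * w :=
  calc C * (2 * w * K) ≤ C * (2 * w * max K K⁻¹) := by gcongr; exact le_max_left _ _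
    _ = 2 * C * max K K⁻¹ * w := by ring

end ComparabilityConstant

theorem metric_derivative_comparable_to_weight_general
    (n : ℕ) (hn : 2 ≤ n)
    (ω : EuclideanSpace ℝ (Fin n) → ℝ) (hω : ∀ x, 0 < ω x)
    (hωloc : LocallyIntegrable ω volume)
    (μ : Measure (EuclideanSpace ℝ (Fin n)))
    (hμ : μ = volume.withDensity fun x => ENNReal.ofReal (ω x))
    (d : EuclideanSpace ℝ (Fin n) → EuclideanSpace ℝ (Fin n) → ℝ)
    (hd_pos : ∀ x y, x ≠ y → 0 < d x y)
    (C : ℝ) (hC : 1 ≤ C)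
    (hcomp : ∀ x y : EuclideanSpace ℝ (Fin n),
      C⁻¹ * (μ (ball x (dist x y))).toReal ≤ d x y ^ n ∧
      d x y ^ n ≤ C * (μ (ball x (dist x y))).toReal) :
    ∃ F : Set (EuclideanSpace ℝ (Fin n)), MeasurableSet F ∧ volume F = 0 ∧
      ∃ C' : ℝ, 1 ≤ C' ∧ ∀ x ∉ F,
        ω x ^ ((1 : ℝ) / n) ≤
          C' * Filter.liminf (fun y => d x y / dist x y) (𝓝[≠] x) ∧
        Filter.limsup (fun y => d x y / dist x y) (𝓝[≠] x) ≤
          C' * ω x ^ ((1 : ℝ) / n) := by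
  have : NeZero n := ⟨by omega⟩
  have hC0 : 0 < C := zero_lt_one.trans_le hC
  set K := volume.real (ball (0 : EuclideanSpace ℝ (Fin n)) 1)
  have hK : 0 < K := ENNReal.toReal_pos (measure_ball_pos _ 0 one_pos).ne' measure_ball_lt_top.ne
  set L := {x | Tendsto (fun r => ⨍ y in closedBall x r, ω y) (𝓝[>] 0) (𝓝 (ω x))}
  refine ⟨toMeasurable volume Lᶜ, measurableSet_toMeasurable _ _,
    (measure_toMeasurable _).trans (ae_iff.1 (ae_tendsto_average_closedBall hωloc)),
    (2 * C * max K K⁻¹) ^ ((1 : ℝ) / n),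
    Real.one_le_rpow (one_le_two_mul_max_inv hC hK) (by positivity), fun x hx => ?_⟩
  have hxL : x ∈ L := not_not.1 fun h => hx (subset_toMeasurable _ _ h)
  have hball := eventually_mul_pow_le_toReal_withDensity_ball_le hωloc (fun y => (hω y).le) hxL
    (half_lt_self (hω x)) (lt_two_mul_self (hω x))
  rw [finrank_euclideanSpace_fin, ← hμ] at hball
  have hratio := eventually_le_pow_div_dist_le hC0.le (hcomp x) hball
  refine rpow_le_mul_liminf_and_limsup_le_mul_rpow (by omega) (hω x).le (by positivity) ?_
  filter_upwards [hratio, self_mem_nhdsWithin] with y ⟨hlo, hhi⟩ (hy : y ≠ x)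
  exact ⟨div_nonneg (hd_pos x y hy.symm).le dist_nonneg,
    (div_two_mul_max_inv_le hC0 hK (hω x).le).trans hlo,
    hhi.trans (mul_le_two_mul_max_inv_mul hC0.le (hω x).le)⟩

/-- (Lemma 6.2, metric-derivative part) There are a Lebesgue-null Borel set `F` and a
constant `C' ≥ 1` depending only on `n` and `C` such that at every point `x ∉ F`,
`ω(x)^{1/n} ≤ C' liminf_{y→x} d(x,y)/|x-y|` and
`limsup_{y→x} d(x,y)/|x-y| ≤ C' ω(x)^{1/n}`. -/
theorem metric_derivative_comparable_to_weight
    (n : ℕ) (hn : 2 ≤ n)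
    (ω : EuclideanSpace ℝ (Fin n) → ℝ) (hω : ∀ x, 0 < ω x)
    (hωloc : LocallyIntegrable ω volume)
    (μ : Measure (EuclideanSpace ℝ (Fin n)))
    (hμ : μ = volume.withDensity fun x => ENNReal.ofReal (ω x))
    (Cd : ℝ) (hCd : 1 ≤ Cd)
    (hdoub : ∀ (x : EuclideanSpace ℝ (Fin n)) (r : ℝ), 0 < r →
      μ (ball x (2 * r)) ≤ ENNReal.ofReal Cd * μ (ball x r))
    (hpos : ∀ (x : EuclideanSpace ℝ (Fin n)) (r : ℝ), 0 < r → 0 < μ (ball x r))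
    (hfin : ∀ (x : EuclideanSpace ℝ (Fin n)) (r : ℝ), 0 < r → μ (ball x r) < ⊤)
    (d : EuclideanSpace ℝ (Fin n) → EuclideanSpace ℝ (Fin n) → ℝ)
    (hd_self : ∀ x, d x x = 0)
    (hd_pos : ∀ x y, x ≠ y → 0 < d x y)
    (hd_symm : ∀ x y, d x y = d y x)
    (hd_tri : ∀ x y z, d x z ≤ d x y + d y z)
    (hd_top : ∀ (x : EuclideanSpace ℝ (Fin n)), ∀ ε : ℝ, 0 < ε →
      (∃ δ > 0, ∀ y, dist x y < δ → d x y < ε) ∧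
      (∃ δ > 0, ∀ y, d x y < δ → dist x y < ε))
    (C : ℝ) (hC : 1 ≤ C)
    (hcomp : ∀ x y : EuclideanSpace ℝ (Fin n),
      C⁻¹ * (μ (ball x (dist x y))).toReal ≤ d x y ^ n ∧
      d x y ^ n ≤ C * (μ (ball x (dist x y))).toReal) :
    ∃ F : Set (EuclideanSpace ℝ (Fin n)), MeasurableSet F ∧ volume F = 0 ∧
      ∃ C' : ℝ, 1 ≤ C' ∧ ∀ x ∉ F,
        ω x ^ ((1 : ℝ) / n) ≤
          C' * Filter.liminf (fun y => d x y / dist x y) (𝓝[≠] x) ∧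
        Filter.limsup (fun y => d x y / dist x y) (𝓝[≠] x) ≤
          C' * ω x ^ ((1 : ℝ) / n) :=
  metric_derivative_comparable_to_weight_general n hn ω hω hωloc μ hμ d hd_pos C hC hcomp
end

section
/- Let u : ℝⁿ → ℝ be L-Lipschitz with respect to the metric d, i.e. |u(z) − u(y)| ≤ L · d(z,y) for all z, y ∈ ℝⁿ. Then there is a constant C' > 0, depending only on n, the doubling constant C_d, and the constant C in the comparability hypothesis between d and μ, such that for every a ∈ ℝⁿ, every R > 0, every unit vector e ∈ ℝⁿ, and every real h with |h| ≤ R, one has ∫_{B(a,R)} |u(x + h e) − u(x)|ⁿ dLⁿ(x) ≤ C' Lⁿ |h|ⁿ μ(B(a, 2R)). (This is the key difference-quotient estimate showing that functions Lipschitz with respect to d belong to the local Sobolev space W^{1,n}_loc(ℝⁿ).) -/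
open MeasureTheory Metric Filter
open scoped Topology ENNReal

private lemma fubini_ball_estimate (n : ℕ) (ω : EuclideanSpace ℝ (Fin n) → ℝ)
    (hωm : AEMeasurable ω volume)
    (a : EuclideanSpace ℝ (Fin n)) (R r : ℝ) (hr : 0 < r) (hrR : r ≤ R) :
    ∫⁻ x in ball a R, (volume.withDensity fun y => ENNReal.ofReal (ω y)) (ball x r)
      ≤ volume (ball (0 : EuclideanSpace ℝ (Fin n)) r) *
        (volume.withDensity fun y => ENNReal.ofReal (ω y)) (ball a (2 * R)) := by
  have hball : ∀ x : EuclideanSpace ℝ (Fin n),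
      (volume.withDensity fun y => ENNReal.ofReal (ω y)) (ball x r)
        = ∫⁻ y, (ball x r).indicator (fun z => ENNReal.ofReal (ω z)) y := by
    intro x
    rw [withDensity_apply _ measurableSet_ball, lintegral_indicator measurableSet_ball]
  have hset : MeasurableSet
      {q : EuclideanSpace ℝ (Fin n) × EuclideanSpace ℝ (Fin n) | dist q.2 q.1 < r} := by
    have : IsOpen {q : EuclideanSpace ℝ (Fin n) × EuclideanSpace ℝ (Fin n) | dist q.2 q.1 < r} :=
      isOpen_lt (continuous_dist.comp (continuous_snd.prodMk continuous_fst)) continuous_const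
    exact this.measurableSet
  have hmeas : AEMeasurable
      (Function.uncurry fun x y : EuclideanSpace ℝ (Fin n) =>
        (ball x r).indicator (fun z => ENNReal.ofReal (ω z)) y)
      ((volume.restrict (ball a R)).prod volume) := by
    have huncurry : (Function.uncurry fun x y : EuclideanSpace ℝ (Fin n) =>
        (ball x r).indicator (fun z => ENNReal.ofReal (ω z)) y) =
        {q : EuclideanSpace ℝ (Fin n) × EuclideanSpace ℝ (Fin n) | dist q.2 q.1 < r}.indicator
          (fun q => ENNReal.ofReal (ω q.2)) := by
      funext q
      simp only [Function.uncurry, Set.indicator, Set.mem_setOf_eq, mem_ball]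
    rw [huncurry]
    have h1 : AEMeasurable (fun q : EuclideanSpace ℝ (Fin n) × EuclideanSpace ℝ (Fin n) =>
        ENNReal.ofReal (ω q.2)) ((volume : Measure (EuclideanSpace ℝ (Fin n))).prod volume) :=
      (ENNReal.measurable_ofReal.comp_aemeasurable hωm).comp_quasiMeasurePreserving
        (Measure.quasiMeasurePreserving_snd
          (μ := (volume : Measure (EuclideanSpace ℝ (Fin n)))) (ν := volume))
    have h2 : AEMeasurable (fun q : EuclideanSpace ℝ (Fin n) × EuclideanSpace ℝ (Fin n) =>
        ENNReal.ofReal (ω q.2)) ((volume.restrict (ball a R)).prod volume) :=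
      h1.mono_ac (Measure.AbsolutelyContinuous.prod
        Measure.restrict_le_self.absolutelyContinuous (Measure.AbsolutelyContinuous.rfl))
    exact h2.indicator hset
  calc ∫⁻ x in ball a R, (volume.withDensity fun y => ENNReal.ofReal (ω y)) (ball x r)
      = ∫⁻ x in ball a R, ∫⁻ y, (ball x r).indicator (fun z => ENNReal.ofReal (ω z)) y :=
        lintegral_congr hball
    _ = ∫⁻ y, ∫⁻ x in ball a R, (ball x r).indicator (fun z => ENNReal.ofReal (ω z)) y :=
        lintegral_lintegral_swap hmeas
    _ ≤ ∫⁻ y, (ball a (2 * R)).indicator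
          (fun z => ENNReal.ofReal (ω z) *
            volume (ball (0 : EuclideanSpace ℝ (Fin n)) r)) y := by
        refine lintegral_mono fun y => ?_
        have hFx : ∀ x : EuclideanSpace ℝ (Fin n),
            (ball x r).indicator (fun z => ENNReal.ofReal (ω z)) y
              = (ball y r).indicator (fun _ => ENNReal.ofReal (ω y)) x := by
          intro x
          simp only [Set.indicator, mem_ball, dist_comm y x]
        have hcalc : (∫⁻ x in ball a R, (ball x r).indicator (fun z => ENNReal.ofReal (ω z)) y)
            = ENNReal.ofReal (ω y) * volume (ball y r ∩ ball a R) := by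
          calc (∫⁻ x in ball a R, (ball x r).indicator (fun z => ENNReal.ofReal (ω z)) y)
              = ∫⁻ x in ball a R, (ball y r).indicator (fun _ => ENNReal.ofReal (ω y)) x :=
                lintegral_congr hFx
            _ = ENNReal.ofReal (ω y) * (volume.restrict (ball a R)) (ball y r) :=
                lintegral_indicator_const measurableSet_ball _
            _ = ENNReal.ofReal (ω y) * volume (ball y r ∩ ball a R) := by
                rw [Measure.restrict_apply measurableSet_ball]
        rw [hcalc]
        by_cases hy : y ∈ ball a (2 * R)
        · rw [Set.indicator_of_mem hy]
          refine mul_le_mul_right ?_ _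
          calc volume (ball y r ∩ ball a R) ≤ volume (ball y r) :=
                measure_mono Set.inter_subset_left
            _ = volume (ball (0 : EuclideanSpace ℝ (Fin n)) r) :=
                Measure.addHaar_ball_center volume y r
        · rw [Set.indicator_of_notMem hy]
          have hempty : ball y r ∩ ball a R = ∅ := by
            ext x
            simp only [Set.mem_inter_iff, mem_ball, Set.mem_empty_iff_false, iff_false]
            rintro ⟨h1, h2⟩
            apply hy
            rw [mem_ball]
            calc dist y a ≤ dist y x + dist x a := dist_triangle y x a
              _ < r + R := add_lt_add (by rwa [dist_comm]) h2
              _ ≤ 2 * R := by linarith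
          rw [hempty]
          simp
    _ = volume (ball (0 : EuclideanSpace ℝ (Fin n)) r) *
          (volume.withDensity fun y => ENNReal.ofReal (ω y)) (ball a (2 * R)) := by
        rw [lintegral_indicator measurableSet_ball,
          lintegral_mul_const' _ _ measure_ball_lt_top.ne,
          withDensity_apply _ measurableSet_ball, mul_comm]

/-- (Lemma 6.3, key estimate) If `u` is `L`-Lipschitz with respect to the metric `d`,
then for every Euclidean ball `B(a,R)`, unit vector `e`, and `|h| ≤ R`,
`∫_{B(a,R)} |u(x+he) - u(x)|ⁿ dx ≤ C' Lⁿ |h|ⁿ μ(B(a,2R))`, with `C'` depending only on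
`n`, `C_d` and `C`. -/
theorem lipschitz_difference_quotient_estimate
    (n : ℕ) (hn : 2 ≤ n)
    (ω : EuclideanSpace ℝ (Fin n) → ℝ) (hω : ∀ x, 0 < ω x)
    (hωloc : LocallyIntegrable ω volume)
    (μ : Measure (EuclideanSpace ℝ (Fin n)))
    (hμ : μ = volume.withDensity fun x => ENNReal.ofReal (ω x))
    (Cd : ℝ) (hCd : 1 ≤ Cd)
    (hdoub : ∀ (x : EuclideanSpace ℝ (Fin n)) (r : ℝ), 0 < r →
      μ (ball x (2 * r)) ≤ ENNReal.ofReal Cd * μ (ball x r))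
    (hpos : ∀ (x : EuclideanSpace ℝ (Fin n)) (r : ℝ), 0 < r → 0 < μ (ball x r))
    (hfin : ∀ (x : EuclideanSpace ℝ (Fin n)) (r : ℝ), 0 < r → μ (ball x r) < ⊤)
    (d : EuclideanSpace ℝ (Fin n) → EuclideanSpace ℝ (Fin n) → ℝ)
    (hd_self : ∀ x, d x x = 0)
    (hd_pos : ∀ x y, x ≠ y → 0 < d x y)
    (hd_symm : ∀ x y, d x y = d y x)
    (hd_tri : ∀ x y z, d x z ≤ d x y + d y z)
    (hd_top : ∀ (x : EuclideanSpace ℝ (Fin n)), ∀ ε : ℝ, 0 < ε →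
      (∃ δ > 0, ∀ y, dist x y < δ → d x y < ε) ∧
      (∃ δ > 0, ∀ y, d x y < δ → dist x y < ε))
    (C : ℝ) (hC : 1 ≤ C)
    (hcomp : ∀ x y : EuclideanSpace ℝ (Fin n),
      C⁻¹ * (μ (ball x (dist x y))).toReal ≤ d x y ^ n ∧
      d x y ^ n ≤ C * (μ (ball x (dist x y))).toReal) :
    ∃ C' : ℝ, 0 < C' ∧
      ∀ (u : EuclideanSpace ℝ (Fin n) → ℝ) (L : ℝ), 0 ≤ L →
      (∀ z y, |u z - u y| ≤ L * d z y) →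
      ∀ (a : EuclideanSpace ℝ (Fin n)) (R : ℝ), 0 < R →
      ∀ e : EuclideanSpace ℝ (Fin n), ‖e‖ = 1 →
      ∀ h : ℝ, |h| ≤ R →
      (∫ x in ball a R, |u (x + h • e) - u x| ^ n ∂volume) ≤
        C' * L ^ n * |h| ^ n * (μ (ball a (2 * R))).toReal := by
  classical
  haveI : NeZero n := ⟨by omega⟩
  have hV0 : volume (ball (0 : EuclideanSpace ℝ (Fin n)) 1) ≠ 0 :=
    (measure_ball_pos volume _ one_pos).ne'
  have hVfin : volume (ball (0 : EuclideanSpace ℝ (Fin n)) 1) ≠ ⊤ := measure_ball_lt_top.ne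
  have hVt : 0 < (volume (ball (0 : EuclideanSpace ℝ (Fin n)) 1)).toReal :=
    ENNReal.toReal_pos hV0 hVfin
  have hC0 : (0:ℝ) < C := lt_of_lt_of_le one_pos hC
  have hCd0 : (0:ℝ) < Cd := lt_of_lt_of_le one_pos hCd
  refine ⟨C * Cd * (volume (ball (0 : EuclideanSpace ℝ (Fin n)) 1)).toReal, by positivity, ?_⟩
  intro u L hL hLip a R hR e he h hh
  have hμ2Rfin : μ (ball a (2 * R)) ≠ ⊤ := (hfin a (2 * R) (by linarith)).ne
  have hRHS0 : 0 ≤ C * Cd * (volume (ball (0 : EuclideanSpace ℝ (Fin n)) 1)).toReal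
      * L ^ n * |h| ^ n * (μ (ball a (2 * R))).toReal := by
    have := abs_nonneg h
    positivity
  rcases eq_or_ne h 0 with hh0 | hh0
  · subst hh0
    simp only [zero_smul, add_zero, sub_self, abs_zero]
    rw [zero_pow (by omega : n ≠ 0)]
    simpa using hRHS0
  · have hr : 0 < |h| := abs_pos.mpr hh0
    have hK0 : 0 ≤ L ^ n * (C * Cd) := by positivity
    -- pointwise bound
    have hpt : ∀ x : EuclideanSpace ℝ (Fin n), |u (x + h • e) - u x| ^ n
        ≤ (L ^ n * (C * Cd)) * (μ (ball x |h|)).toReal := by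
      intro x
      have hd0 : 0 ≤ d (x + h • e) x := by
        rcases eq_or_ne (x + h • e) x with hxe | hxe
        · rw [hxe, hd_self]
        · exact (hd_pos _ _ hxe).le
      have h1 : |u (x + h • e) - u x| ^ n ≤ (L * d (x + h • e) x) ^ n :=
        pow_le_pow_left₀ (abs_nonneg _) (hLip _ _) n
      have hdist : dist (x + h • e) x = |h| := by
        rw [dist_eq_norm, add_sub_cancel_left, norm_smul, he, mul_one, Real.norm_eq_abs]
      have h3 : d (x + h • e) x ^ n ≤ C * (μ (ball (x + h • e) |h|)).toReal := by
        have h3' := (hcomp (x + h • e) x).2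
        rwa [hdist] at h3'
      have hsub : ball (x + h • e) |h| ⊆ ball x (2 * |h|) := by
        intro y hy
        rw [mem_ball] at hy ⊢
        calc dist y x ≤ dist y (x + h • e) + dist (x + h • e) x := dist_triangle _ _ _
          _ < |h| + |h| := add_lt_add_of_lt_of_le hy (le_of_eq hdist)
          _ = 2 * |h| := by ring
      have h4 : μ (ball (x + h • e) |h|) ≤ ENNReal.ofReal Cd * μ (ball x |h|) :=
        (measure_mono hsub).trans (hdoub x |h| hr)
      have h5 : (μ (ball (x + h • e) |h|)).toReal ≤ Cd * (μ (ball x |h|)).toReal := by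
        have hfin' : ENNReal.ofReal Cd * μ (ball x |h|) ≠ ⊤ :=
          ENNReal.mul_ne_top ENNReal.ofReal_ne_top (hfin x |h| hr).ne
        have h5' := ENNReal.toReal_mono hfin' h4
        rwa [ENNReal.toReal_mul, ENNReal.toReal_ofReal hCd0.le] at h5'
      calc |u (x + h • e) - u x| ^ n ≤ (L * d (x + h • e) x) ^ n := h1
        _ = L ^ n * d (x + h • e) x ^ n := mul_pow L _ n
        _ ≤ L ^ n * (C * (μ (ball (x + h • e) |h|)).toReal) :=
            mul_le_mul_of_nonneg_left h3 (by positivity)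
        _ ≤ L ^ n * (C * (Cd * (μ (ball x |h|)).toReal)) := by
            refine mul_le_mul_of_nonneg_left (mul_le_mul_of_nonneg_left h5 hC0.le) (by positivity)
        _ = (L ^ n * (C * Cd)) * (μ (ball x |h|)).toReal := by ring
    by_cases hint : IntegrableOn (fun x => |u (x + h • e) - u x| ^ n) (ball a R) volume
    · have hfnn : 0 ≤ᵐ[volume.restrict (ball a R)]
          fun x => |u (x + h • e) - u x| ^ n :=
        Filter.Eventually.of_forall fun x => by positivity
      rw [integral_eq_lintegral_of_nonneg_ae hfnn hint.aestronglyMeasurable]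
      have hbound : (∫⁻ x in ball a R, ENNReal.ofReal (|u (x + h • e) - u x| ^ n))
          ≤ ENNReal.ofReal (L ^ n * (C * Cd)) * (ENNReal.ofReal (|h| ^ n) *
            (volume (ball (0 : EuclideanSpace ℝ (Fin n)) 1) * μ (ball a (2 * R)))) := by
        calc (∫⁻ x in ball a R, ENNReal.ofReal (|u (x + h • e) - u x| ^ n))
            ≤ ∫⁻ x in ball a R, ENNReal.ofReal (L ^ n * (C * Cd)) * μ (ball x |h|) := by
              refine lintegral_mono fun x => ?_
              calc ENNReal.ofReal (|u (x + h • e) - u x| ^ n)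
                  ≤ ENNReal.ofReal ((L ^ n * (C * Cd)) * (μ (ball x |h|)).toReal) :=
                    ENNReal.ofReal_le_ofReal (hpt x)
                _ = ENNReal.ofReal (L ^ n * (C * Cd))
                      * ENNReal.ofReal ((μ (ball x |h|)).toReal) :=
                    ENNReal.ofReal_mul hK0
                _ = ENNReal.ofReal (L ^ n * (C * Cd)) * μ (ball x |h|) := by
                    rw [ENNReal.ofReal_toReal (hfin x |h| hr).ne]
          _ = ENNReal.ofReal (L ^ n * (C * Cd)) * ∫⁻ x in ball a R, μ (ball x |h|) :=
              lintegral_const_mul' _ _ ENNReal.ofReal_ne_top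
          _ ≤ ENNReal.ofReal (L ^ n * (C * Cd)) *
                (volume (ball (0 : EuclideanSpace ℝ (Fin n)) |h|) * μ (ball a (2 * R))) := by
              refine mul_le_mul_right ?_ _
              rw [hμ]
              exact fubini_ball_estimate n ω hωloc.aestronglyMeasurable.aemeasurable a R |h| hr hh
          _ = ENNReal.ofReal (L ^ n * (C * Cd)) * (ENNReal.ofReal (|h| ^ n) *
                (volume (ball (0 : EuclideanSpace ℝ (Fin n)) 1) * μ (ball a (2 * R)))) := by
              rw [Measure.addHaar_ball volume (0 : EuclideanSpace ℝ (Fin n)) hr.le,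
                finrank_euclideanSpace_fin, mul_assoc]
      have hfin2 : ENNReal.ofReal (L ^ n * (C * Cd)) * (ENNReal.ofReal (|h| ^ n) *
          (volume (ball (0 : EuclideanSpace ℝ (Fin n)) 1) * μ (ball a (2 * R)))) ≠ ⊤ :=
        ENNReal.mul_ne_top ENNReal.ofReal_ne_top
          (ENNReal.mul_ne_top ENNReal.ofReal_ne_top (ENNReal.mul_ne_top hVfin hμ2Rfin))
      refine (ENNReal.toReal_mono hfin2 hbound).trans ?_
      rw [ENNReal.toReal_mul, ENNReal.toReal_mul, ENNReal.toReal_mul,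
        ENNReal.toReal_ofReal hK0, ENNReal.toReal_ofReal (by positivity : (0:ℝ) ≤ |h| ^ n)]
      apply le_of_eq
      ring
    · rw [integral_undef hint]
      exact hRHS0
end

section
/- Let n ≥ 2 and set t = n/(n−1). There is a constant C = C(n) such that the following holds. Let u : ℝⁿ → ℝ be continuously differentiable, let B = B(x₀, r) be a Euclidean ball, let 0 < γ < 1, and suppose the set A = {x ∈ B : u(x) ≠ 0} satisfies Lⁿ(A) ≤ γ Lⁿ(B). Then ( ⨍_B |u|^t dLⁿ )^{1/t} ≤ (C / (1 − γ^{1−1/t})) · r · ⨍_{2B} ‖∇u‖ dLⁿ, where ⨍ denotes the average integral and 2B = B(x₀, 2r). -/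
/-!
Let `c` be the mean of `u` over `2B`. Multiplying `u - c` by a cutoff that is `1` on `B`, supported
in `2B` and has gradient `O(1/r)`, the Gagliardo–Nirenberg–Sobolev inequality together with the
Poincaré inequality on `2B` gives `‖u - c‖_{L^t(B)} ≤ C ‖∇u‖_{L¹(2B)}`. As `u` vanishes on a part
of `B` of measure at least `(1 - γ) |B|`, where `|u - c| = |c|`, the constant term is controlled by
the same norm: `|c| |B|^{1/t} ≤ (1 - γ)^{-1/t} ‖u - c‖_{L^t(B)}`, and
`1 + (1 - γ)^{-1/t} ≤ 2 / (1 - γ^{1/n})`. Dividing by the volumes, `|B|^{-1/t} = c_n r / |2B|`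
turns the `L^t`–`L¹` estimate into the averaged one.
-/

open MeasureTheory Metric Set Module Function
open scoped ENNReal NNReal

theorem one_add_inv_one_sub_rpow_le {γ b : ℝ} (hγ0 : 0 ≤ γ) (hγ1 : γ < 1) (hb0 : 0 ≤ b)
    (hb1 : b < 1) : 1 + (1 - γ)⁻¹ ^ b ≤ 2 / (1 - γ ^ (1 - b)) := by
  have hγb : γ ≤ γ ^ (1 - b) := Real.self_le_rpow_of_le_one hγ0 hγ1.le (by linarith)
  have hγb1 : γ ^ (1 - b) < 1 := Real.rpow_lt_one hγ0 hγ1 (by linarith)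
  have h1 : (1 - γ)⁻¹ ^ b ≤ (1 - γ)⁻¹ :=
    Real.rpow_le_self_of_one_le (one_le_inv₀ (by linarith) |>.mpr (by linarith)) hb1.le
  have h2 : (1 - γ)⁻¹ ≤ (1 - γ ^ (1 - b))⁻¹ := inv_anti₀ (by linarith) (by linarith)
  have h3 : 1 ≤ (1 - γ ^ (1 - b))⁻¹ := one_le_inv₀ (by linarith) |>.mpr (by linarith)
  rw [div_eq_mul_inv]
  linarith

section MeasureSpace

variable {α F : Type*} [MeasurableSpace α] {μ : Measure α} [NormedAddCommGroup F]

theorem enorm_sub_setAverage_le [NormedSpace ℝ F] [CompleteSpace F] {s : Set α} (hs0 : μ s ≠ 0)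
    (hs : μ s ≠ ∞) {v : α → F} (hv : IntegrableOn v s μ) (c : F) :
    ‖c - ⨍ y in s, v y ∂μ‖ₑ ≤ (μ s)⁻¹ * ∫⁻ y in s, ‖c - v y‖ₑ ∂μ := by
  set ν := (μ s)⁻¹ • μ.restrict s
  have hν : ν univ = 1 := by simp [ν, ENNReal.inv_mul_cancel hs0 hs]
  have hvν : Integrable v ν := hv.smul_measure (ENNReal.inv_ne_top.mpr hs0)
  have : IsFiniteMeasure ν := ⟨by simp [hν]⟩
  have hmean : c - ⨍ y in s, v y ∂μ = ∫ y, c - v y ∂ν := by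
    rw [setAverage_eq', integral_sub (integrable_const c) hvν, integral_const, measureReal_def, hν,
      ENNReal.toReal_one, one_smul]
  rw [hmean, ← smul_eq_mul, ← lintegral_smul_measure]
  exact enorm_integral_le_lintegral_enorm _

theorem measure_le_inv_one_sub_mul_measure_setOf_eq_zero {s : Set α} (hs : μ s ≠ ∞) {f : α → F}
    {γ : ℝ≥0∞} (hγ : γ < 1) (hsupp : μ {x ∈ s | f x ≠ 0} ≤ γ * μ s) :
    μ s ≤ (1 - γ)⁻¹ * μ {x ∈ s | f x = 0} := by
  have hsplit : μ s ≤ μ {x ∈ s | f x = 0} + γ * μ s := by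
    refine (measure_mono fun x hx ↦ ?_).trans
      ((measure_union_le _ _).trans (add_le_add_right hsupp _))
    exact (em (f x = 0)).imp (⟨hx, ·⟩) (⟨hx, ·⟩)
  have h1γ : (1 - γ) * μ s ≤ μ {x ∈ s | f x = 0} := by
    rw [ENNReal.sub_mul fun _ _ ↦ hs, one_mul]
    exact tsub_le_iff_right.mpr hsplit
  calc μ s = (1 - γ)⁻¹ * ((1 - γ) * μ s) :=
        (ENNReal.inv_mul_cancel_left (tsub_pos_of_lt hγ).ne' (by finiteness)).symm
    _ ≤ _ := mul_le_mul_right h1γ _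

-- On the zero set of `f`, which carries at least a `(1 - γ)`-fraction of `μ s`, `|f - c| = |c|`.
theorem eLpNorm_const_restrict_le_of_measure_support_le {s : Set α} (hs : MeasurableSet s)
    (hμs : μ s ≠ ∞) {f : α → F} (hf : StronglyMeasurable f) {p : ℝ≥0∞} (hp : p ≠ 0)
    {γ : ℝ≥0∞} (hγ : γ < 1) (hsupp : μ {x ∈ s | f x ≠ 0} ≤ γ * μ s) (c : F) :
    eLpNorm (fun _ ↦ c) p (μ.restrict s) ≤
      (1 - γ)⁻¹ ^ (1 / p.toReal) * eLpNorm (fun x ↦ f x - c) p (μ.restrict s) := by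
  set Z := {x ∈ s | f x = 0}
  have hsZ : μ s ≤ (1 - γ)⁻¹ * μ Z :=
    measure_le_inv_one_sub_mul_measure_setOf_eq_zero hμs hγ hsupp
  rcases eq_or_ne (μ Z) 0 with hZ0 | hZ0
  · simp [Measure.restrict_eq_zero.mpr (by simpa [hZ0] using hsZ)]
  have hZ : MeasurableSet Z := hs.inter (hf.measurableSet_eq_fun stronglyMeasurable_const)
  have hs0 : μ.restrict s ≠ 0 :=
    Measure.restrict_eq_zero.not.mpr fun h ↦ hZ0 (measure_mono_null (fun x hx ↦ hx.1) h)
  calc eLpNorm (fun _ ↦ c) p (μ.restrict s) = ‖c‖ₑ * μ s ^ (1 / p.toReal) := by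
        rw [eLpNorm_const _ hp hs0, Measure.restrict_apply_univ]
    _ ≤ ‖c‖ₑ * ((1 - γ)⁻¹ * μ Z) ^ (1 / p.toReal) := by gcongr
    _ = (1 - γ)⁻¹ ^ (1 / p.toReal) * eLpNorm (fun _ ↦ c) p (μ.restrict Z) := by
        rw [eLpNorm_const _ hp (Measure.restrict_eq_zero.not.mpr hZ0),
          Measure.restrict_apply_univ, ENNReal.mul_rpow_of_nonneg _ _ (by positivity)]
        ring
    _ = (1 - γ)⁻¹ ^ (1 / p.toReal) * eLpNorm (fun x ↦ f x - c) p (μ.restrict Z) := by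
        rw [← eLpNorm_neg]
        congr 1
        exact eLpNorm_congr_ae <| (ae_restrict_iff' hZ).mpr <| .of_forall fun x hx ↦ by simp [hx.2]
    _ ≤ _ := by
        gcongr
        exact fun x hx ↦ hx.1

theorem eLpNorm_restrict_le_of_measure_support_le {s : Set α} (hs : MeasurableSet s)
    (hμs : μ s ≠ ∞) {f : α → F} (hf : StronglyMeasurable f) {p : ℝ≥0∞} (hp : 1 ≤ p)
    {γ : ℝ≥0∞} (hγ : γ < 1) (hsupp : μ {x ∈ s | f x ≠ 0} ≤ γ * μ s) (c : F) :
    eLpNorm f p (μ.restrict s) ≤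
      (1 + (1 - γ)⁻¹ ^ (1 / p.toReal)) * eLpNorm (fun x ↦ f x - c) p (μ.restrict s) := by
  have hsum : f = (fun x ↦ f x - c) + fun _ ↦ c := by ext; simp
  calc eLpNorm f p (μ.restrict s)
      ≤ eLpNorm (fun x ↦ f x - c) p (μ.restrict s) + eLpNorm (fun _ ↦ c) p (μ.restrict s) := by
        conv_lhs => rw [hsum]
        exact eLpNorm_add_le (hf.aestronglyMeasurable.sub aestronglyMeasurable_const)
          aestronglyMeasurable_const hp
    _ ≤ _ := by
        rw [add_mul, one_mul]
        gcongr
        exact eLpNorm_const_restrict_le_of_measure_support_le hs hμs hf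
          (zero_lt_one.trans_le hp).ne' hγ hsupp c

theorem setAverage_norm_rpow_rpow_one_div {s : Set α} {p : ℝ≥0} (hp : p ≠ 0) {f : α → F}
    (hf : AEStronglyMeasurable f (μ.restrict s)) :
    (⨍ x in s, ‖f x‖ ^ (p : ℝ) ∂μ) ^ (1 / (p : ℝ)) =
      (μ.real s)⁻¹ ^ (1 / (p : ℝ)) * (eLpNorm f p (μ.restrict s)).toReal := by
  rw [setAverage_eq, smul_eq_mul, Real.mul_rpow (inv_nonneg.2 measureReal_nonneg)
    (integral_nonneg fun _ ↦ by positivity), toReal_eLpNorm hf,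
    lpNorm_nnreal_eq_integral_norm_rpow hp hf, one_div]

end MeasureSpace

section NormedSpace

variable {E F : Type*} [NormedAddCommGroup E] [NormedSpace ℝ E] [NormedAddCommGroup F]
  [NormedSpace ℝ F]

theorem enorm_sub_le_lintegral_fderiv_segment [CompleteSpace F] {f : E → F} (hf : ContDiff ℝ 1 f)
    (x y : E) :
    ‖f x - f y‖ₑ ≤ ‖x - y‖ₑ * ∫⁻ s in Ioc (0 : ℝ) 1, ‖fderiv ℝ f (s • x + (1 - s) • y)‖ₑ := by
  set γ : ℝ → E := fun s ↦ s • x + (1 - s) • y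
  have hγ : ∀ s, HasDerivAt γ (x - y) s := fun s ↦ by
    have : γ = fun s ↦ y + s • (x - y) := by ext s; simp only [γ]; module
    simpa [this] using ((hasDerivAt_id s).smul_const (x - y)).const_add y
  have hderiv : ∀ s, HasDerivAt (f ∘ γ) (fderiv ℝ f (γ s) (x - y)) s := fun s ↦
    (hf.differentiable one_ne_zero (γ s)).hasFDerivAt.comp_hasDerivAt s (hγ s)
  have hcont : Continuous fun s ↦ fderiv ℝ f (γ s) (x - y) :=
    ((hf.continuous_fderiv one_ne_zero).comp (by fun_prop)).clm_apply continuous_const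
  have hftc : f x - f y = ∫ s in Ioc 0 1, fderiv ℝ f (γ s) (x - y) := by
    rw [← intervalIntegral.integral_of_le zero_le_one,
      intervalIntegral.integral_eq_sub_of_hasDerivAt (fun s _ ↦ hderiv s)
        (hcont.intervalIntegrable 0 1)]
    simp [γ]
  calc ‖f x - f y‖ₑ ≤ ∫⁻ s in Ioc 0 1, ‖fderiv ℝ f (γ s) (x - y)‖ₑ :=
        hftc ▸ enorm_integral_le_lintegral_enorm _
    _ ≤ ∫⁻ s in Ioc 0 1, ‖x - y‖ₑ * ‖fderiv ℝ f (γ s)‖ₑ := by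
        gcongr with s
        rw [mul_comm]
        exact (fderiv ℝ f (γ s)).le_opENorm (x - y)
    _ = _ := lintegral_const_mul' _ _ enorm_ne_top

theorem exists_cutoff_ball [FiniteDimensional ℝ E] :
    ∃ M : ℝ≥0, ∀ (x₀ : E) {r : ℝ}, 0 < r → ∃ φ : E → ℝ,
      ContDiff ℝ 1 φ ∧ HasCompactSupport φ ∧ EqOn φ 1 (ball x₀ r) ∧ (∀ x, ‖φ x‖ ≤ 1) ∧
      tsupport φ ⊆ ball x₀ (2 * r) ∧ ∀ x, ‖fderiv ℝ φ x‖ ≤ M / r := by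
  -- outer radius `3 / 2 < 2`, so that the closed support stays inside the open ball of radius `2`
  let ψ : ContDiffBump (0 : E) := ⟨1, 3 / 2, one_pos, by norm_num⟩
  obtain ⟨M, hM⟩ := ContDiff.lipschitzWith_of_hasCompactSupport ψ.hasCompactSupport
    (ψ.contDiff (n := 1)) one_ne_zero
  refine ⟨M, fun x₀ r hr ↦ ?_⟩
  have hnorm : ∀ x, ‖r⁻¹ • (x - x₀)‖ = ‖x - x₀‖ / r := fun x ↦ by
    rw [norm_smul, Real.norm_eq_abs, abs_inv, abs_of_pos hr, inv_mul_eq_div]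
  have hsupp : support (fun x ↦ ψ (r⁻¹ • (x - x₀))) ⊆ closedBall x₀ (3 / 2 * r) := fun x hx ↦ by
    have := (ψ.support_eq ▸ hx : r⁻¹ • (x - x₀) ∈ ball 0 (3 / 2))
    rw [mem_ball_zero_iff, hnorm, div_lt_iff₀ hr] at this
    exact mem_closedBall_iff_norm.mpr this.le
  have htsupp := closure_minimal hsupp isClosed_closedBall
  refine ⟨fun x ↦ ψ (r⁻¹ • (x - x₀)), ψ.contDiff.comp (by fun_prop),
    (isCompact_closedBall _ _).of_isClosed_subset (isClosed_tsupport _) htsupp,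
    fun x hx ↦ ψ.one_of_mem_closedBall ?_, fun x ↦ ?_,
    htsupp.trans (closedBall_subset_ball (by linarith)), fun x ↦ ?_⟩
  · rw [mem_closedBall_zero_iff, hnorm, div_le_one hr]
    exact (mem_ball_iff_norm.mp hx).le
  · rw [Real.norm_eq_abs, abs_le]
    exact ⟨by linarith [ψ.nonneg (x := r⁻¹ • (x - x₀))], ψ.le_one⟩
  · have hA := (lipschitzWith_smul (β := E) r⁻¹).comp
      (IsometryEquiv.subRight x₀).isometry.lipschitz
    refine (norm_fderiv_le_of_lipschitz ℝ (hM.comp hA) (x₀ := x)).trans_eq ?_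
    simp [abs_of_pos hr, div_eq_mul_inv]

theorem enorm_fderiv_smul_le_indicator {v : E → F} (hv : ContDiff ℝ 1 v) {φ : E → ℝ}
    (hφ : ContDiff ℝ 1 φ) {t : Set E} (hφ_le : ∀ x, ‖φ x‖ ≤ 1) (hφt : tsupport φ ⊆ t) {L : ℝ}
    (hL : ∀ x, ‖fderiv ℝ φ x‖ ≤ L) (x : E) :
    ‖fderiv ℝ (fun y ↦ φ y • v y) x‖ₑ ≤
      t.indicator (fun y ↦ ‖fderiv ℝ v y‖ₑ + ENNReal.ofReal L * ‖v y‖ₑ) x := by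
  by_cases hx : x ∈ t
  · rw [indicator_of_mem hx, fderiv_fun_smul (hφ.differentiable one_ne_zero x)
      (hv.differentiable one_ne_zero x), ← ofReal_norm, ← ofReal_norm, ← ofReal_norm,
      ← ENNReal.ofReal_mul ((norm_nonneg _).trans (hL x)),
      ← ENNReal.ofReal_add (norm_nonneg _) (by positivity [(norm_nonneg _).trans (hL x)])]
    refine ENNReal.ofReal_le_ofReal ((norm_add_le _ _).trans (add_le_add ?_ ?_))
    · rw [norm_smul]
      exact mul_le_of_le_one_left (norm_nonneg _) (hφ_le x)
    · rw [ContinuousLinearMap.norm_smulRight_apply]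
      exact mul_le_mul_of_nonneg_right (hL x) (norm_nonneg _)
  · have : x ∉ tsupport fun y ↦ φ y • v y := fun h ↦ hx (hφt (tsupport_smul_subset_left _ _ h))
    rw [notMem_support.mp fun h ↦ this (support_fderiv_subset ℝ h)]
    exact (enorm_zero (E := E →L[ℝ] F)).trans_le zero_le

end NormedSpace

section AddHaar

variable {E F : Type*} [NormedAddCommGroup E] [NormedSpace ℝ E] [MeasurableSpace E] [BorelSpace E]
  [FiniteDimensional ℝ E] (μ : Measure E) [μ.IsAddHaarMeasure] [NormedAddCommGroup F]
  [NormedSpace ℝ F]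

theorem lintegral_comp_smul_add {g : E → ℝ≥0∞} (hg : Measurable g) {a : ℝ} (ha : a ≠ 0) (b : E) :
    ∫⁻ x, g (a • x + b) ∂μ = ENNReal.ofReal |(a ^ finrank ℝ E)⁻¹| * ∫⁻ y, g y ∂μ := by
  rw [← lintegral_add_right_eq_self (μ := μ) g b, ← smul_eq_mul, ← lintegral_smul_measure,
    ← Measure.map_addHaar_smul μ ha]
  exact (lintegral_map (hg.comp (measurable_add_const b)) (measurable_const_smul a)).symm

theorem setLIntegral_comp_smul_add_le {g : E → ℝ≥0∞} (hg : Measurable g) {a : ℝ} (ha : a ≠ 0)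
    {b : E} {s t : Set E} (hs : MeasurableSet s) (ht : MeasurableSet t)
    (hst : MapsTo (fun x ↦ a • x + b) s t) :
    ∫⁻ x in s, g (a • x + b) ∂μ ≤ ENNReal.ofReal |(a ^ finrank ℝ E)⁻¹| * ∫⁻ y in t, g y ∂μ := by
  calc ∫⁻ x in s, g (a • x + b) ∂μ = ∫⁻ x in s, t.indicator g (a • x + b) ∂μ :=
        setLIntegral_congr_fun hs fun x hx ↦ (indicator_of_mem (hst hx) g).symm
    _ ≤ ∫⁻ x, t.indicator g (a • x + b) ∂μ := setLIntegral_le_lintegral _ _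
    _ = _ := by rw [lintegral_comp_smul_add μ (hg.indicator ht) ha, lintegral_indicator ht]

theorem setLIntegral_ball_comp_convexComb_le {g : E → ℝ≥0∞} (hg : Measurable g) {x₀ z : E} {r a : ℝ}
    (hz : z ∈ ball x₀ r) (ha : 1 / 2 ≤ a) (ha1 : a ≤ 1) :
    ∫⁻ x in ball x₀ r, g (a • x + (1 - a) • z) ∂μ ≤
      2 ^ finrank ℝ E * ∫⁻ y in ball x₀ r, g y ∂μ := by
  have ha0 : 0 < a := by linarith
  have hmaps : MapsTo (fun x ↦ a • x + (1 - a) • z) (ball x₀ r) (ball x₀ r) :=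
    fun x hx ↦ convex_ball x₀ r hx hz ha0.le (by linarith) (by ring)
  refine (setLIntegral_comp_smul_add_le μ hg ha0.ne' measurableSet_ball measurableSet_ball
    hmaps).trans (mul_le_mul_left ?_ _)
  rw [abs_of_nonneg (by positivity), ← inv_pow, ENNReal.ofReal_pow (by positivity)]
  gcongr
  rw [← ENNReal.ofReal_ofNat]
  exact ENNReal.ofReal_le_ofReal ((inv_le_comm₀ ha0 two_pos).mpr (by linarith))

theorem lintegral_ball_ball_comp_convexComb_le {g : E → ℝ≥0∞} (hg : Measurable g) (x₀ : E)
    (r : ℝ) {σ : ℝ} (hσ0 : 0 ≤ σ) (hσ1 : σ ≤ 1) :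
    ∫⁻ x in ball x₀ r, ∫⁻ y in ball x₀ r, g (σ • x + (1 - σ) • y) ∂μ ∂μ ≤
      μ (ball x₀ r) * (2 ^ finrank ℝ E * ∫⁻ y in ball x₀ r, g y ∂μ) := by
  -- substitute in whichever of `x`, `y` has weight `≥ 1 / 2`, so the Jacobian is at most `2 ^ d`
  rcases le_total (1 / 2) σ with hσ | hσ
  · rw [lintegral_lintegral_swap (by fun_prop)]
    calc ∫⁻ y in ball x₀ r, ∫⁻ x in ball x₀ r, g (σ • x + (1 - σ) • y) ∂μ ∂μ
        ≤ ∫⁻ y in ball x₀ r, 2 ^ finrank ℝ E * ∫⁻ y in ball x₀ r, g y ∂μ ∂μ :=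
          setLIntegral_mono' measurableSet_ball fun y hy ↦
            setLIntegral_ball_comp_convexComb_le μ hg hy hσ hσ1
      _ = _ := by rw [setLIntegral_const, mul_comm]
  · calc ∫⁻ x in ball x₀ r, ∫⁻ y in ball x₀ r, g (σ • x + (1 - σ) • y) ∂μ ∂μ
        ≤ ∫⁻ x in ball x₀ r, 2 ^ finrank ℝ E * ∫⁻ y in ball x₀ r, g y ∂μ ∂μ := by
          refine setLIntegral_mono' measurableSet_ball fun x hx ↦ ?_
          simpa only [add_comm, sub_sub_cancel] using
            setLIntegral_ball_comp_convexComb_le μ hg hx (a := 1 - σ) (by linarith) (by linarith)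
      _ = _ := by rw [setLIntegral_const, mul_comm]

theorem lintegral_ball_ball_enorm_sub_le [CompleteSpace F] {v : E → F} (hv : ContDiff ℝ 1 v)
    (x₀ : E) (r : ℝ) :
    ∫⁻ x in ball x₀ r, ∫⁻ y in ball x₀ r, ‖v x - v y‖ₑ ∂μ ∂μ ≤
      μ (ball x₀ r) * (2 ^ finrank ℝ E * ENNReal.ofReal (2 * r) *
        ∫⁻ y in ball x₀ r, ‖fderiv ℝ v y‖ₑ ∂μ) := by
  set g : E → ℝ≥0∞ := fun z ↦ ‖fderiv ℝ v z‖ₑ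
  have hg : Continuous g := (hv.continuous_fderiv one_ne_zero).enorm
  have hdist : ∀ x ∈ ball x₀ r, ∀ y ∈ ball x₀ r, ‖x - y‖ₑ ≤ ENNReal.ofReal (2 * r) := by
    intro x hx y hy
    rw [← ofReal_norm, ← dist_eq_norm]
    exact ENNReal.ofReal_le_ofReal ((dist_triangle_right x y x₀).trans
      (by linarith [mem_ball.mp hx, mem_ball.mp hy]))
  calc ∫⁻ x in ball x₀ r, ∫⁻ y in ball x₀ r, ‖v x - v y‖ₑ ∂μ ∂μ
      ≤ ∫⁻ x in ball x₀ r, ∫⁻ y in ball x₀ r,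
          (ENNReal.ofReal (2 * r) * ∫⁻ σ in Ioc (0 : ℝ) 1, g (σ • x + (1 - σ) • y)) ∂μ ∂μ := by
        refine setLIntegral_mono' measurableSet_ball fun x hx ↦
          setLIntegral_mono' measurableSet_ball fun y hy ↦ ?_
        exact (enorm_sub_le_lintegral_fderiv_segment hv x y).trans
          (mul_le_mul_left (hdist x hx y hy) _)
    _ = ENNReal.ofReal (2 * r) * ∫⁻ σ in Ioc (0 : ℝ) 1,
          ∫⁻ x in ball x₀ r, ∫⁻ y in ball x₀ r, g (σ • x + (1 - σ) • y) ∂μ ∂μ := by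
        have hswap : ∀ x, ∫⁻ y in ball x₀ r, (∫⁻ σ in Ioc (0 : ℝ) 1, g (σ • x + (1 - σ) • y)) ∂μ =
            ∫⁻ σ in Ioc (0 : ℝ) 1, ∫⁻ y in ball x₀ r, g (σ • x + (1 - σ) • y) ∂μ := fun x ↦
          lintegral_lintegral_swap (by fun_prop)
        simp_rw [lintegral_const_mul' _ _ ENNReal.ofReal_ne_top, hswap]
        rw [lintegral_lintegral_swap (by fun_prop)]
    _ ≤ ENNReal.ofReal (2 * r) * ∫⁻ σ in Ioc (0 : ℝ) 1,
          μ (ball x₀ r) * (2 ^ finrank ℝ E * ∫⁻ y in ball x₀ r, g y ∂μ) := by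
        refine mul_le_mul_right (setLIntegral_mono' measurableSet_Ioc fun σ hσ ↦
          lintegral_ball_ball_comp_convexComb_le μ hg.measurable x₀ r hσ.1.le hσ.2) _
    _ = _ := by
        rw [setLIntegral_const, Real.volume_Ioc, sub_zero, ENNReal.ofReal_one, mul_one]
        ring

theorem lintegral_enorm_sub_setAverage_le [CompleteSpace F] {v : E → F} (hv : ContDiff ℝ 1 v)
    (x₀ : E) {r : ℝ} (hr : 0 < r) :
    ∫⁻ x in ball x₀ r, ‖v x - ⨍ y in ball x₀ r, v y ∂μ‖ₑ ∂μ ≤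
      2 ^ finrank ℝ E * ENNReal.ofReal (2 * r) * ∫⁻ x in ball x₀ r, ‖fderiv ℝ v x‖ₑ ∂μ := by
  have hB0 : μ (ball x₀ r) ≠ 0 := (measure_ball_pos μ x₀ hr).ne'
  have hBtop : μ (ball x₀ r) ≠ ∞ := measure_ball_lt_top.ne
  have hvB : IntegrableOn v (ball x₀ r) μ :=
    (hv.continuous.continuousOn.integrableOn_compact (isCompact_closedBall x₀ r)).mono_set
      ball_subset_closedBall
  calc ∫⁻ x in ball x₀ r, ‖v x - ⨍ y in ball x₀ r, v y ∂μ‖ₑ ∂μ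
      ≤ ∫⁻ x in ball x₀ r, (μ (ball x₀ r))⁻¹ * ∫⁻ y in ball x₀ r, ‖v x - v y‖ₑ ∂μ ∂μ :=
        lintegral_mono fun x ↦ enorm_sub_setAverage_le hB0 hBtop hvB (v x)
    _ = (μ (ball x₀ r))⁻¹ * ∫⁻ x in ball x₀ r, ∫⁻ y in ball x₀ r, ‖v x - v y‖ₑ ∂μ ∂μ :=
        lintegral_const_mul' _ _ (ENNReal.inv_ne_top.mpr hB0)
    _ ≤ (μ (ball x₀ r))⁻¹ * (μ (ball x₀ r) * (2 ^ finrank ℝ E * ENNReal.ofReal (2 * r) *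
          ∫⁻ y in ball x₀ r, ‖fderiv ℝ v y‖ₑ ∂μ)) :=
        mul_le_mul_right (lintegral_ball_ball_enorm_sub_le μ hv x₀ r) _
    _ = _ := ENNReal.inv_mul_cancel_left hB0 hBtop

theorem eLpNorm_restrict_le_of_cutoff {p : ℝ≥0} (hp : (finrank ℝ E : ℝ≥0).HolderConjugate p)
    {v : E → F} (hv : ContDiff ℝ 1 v) {φ : E → ℝ} (hφ : ContDiff ℝ 1 φ)
    (hφs : HasCompactSupport φ) {s t : Set E} (hs : MeasurableSet s) (ht : MeasurableSet t)
    (hφ1 : EqOn φ 1 s) (hφ_le : ∀ x, ‖φ x‖ ≤ 1) (hφt : tsupport φ ⊆ t) {L : ℝ}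
    (hL : ∀ x, ‖fderiv ℝ φ x‖ ≤ L) :
    eLpNorm v p (μ.restrict s) ≤ eLpNormLESNormFDerivOneConst μ p *
      (∫⁻ x in t, ‖fderiv ℝ v x‖ₑ ∂μ + ENNReal.ofReal L * ∫⁻ x in t, ‖v x‖ₑ ∂μ) := by
  have hcut : eLpNorm v p (μ.restrict s) = eLpNorm (fun x ↦ φ x • v x) p (μ.restrict s) :=
    eLpNorm_congr_ae <| (ae_restrict_iff' hs).mpr <| .of_forall fun x hx ↦ by simp [hφ1 hx]
  calc eLpNorm v p (μ.restrict s) ≤ eLpNorm (fun x ↦ φ x • v x) p μ :=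
        hcut ▸ eLpNorm_mono_measure _ Measure.restrict_le_self
    _ ≤ eLpNormLESNormFDerivOneConst μ p * eLpNorm (fderiv ℝ fun x ↦ φ x • v x) 1 μ :=
        eLpNorm_le_eLpNorm_fderiv_one μ (hφ.smul hv) hφs.smul_right hp
    _ ≤ _ := by
        rw [eLpNorm_one_eq_lintegral_enorm]
        refine mul_le_mul_right ((lintegral_mono fun x ↦
          enorm_fderiv_smul_le_indicator hv hφ hφ_le hφt hL x).trans_eq ?_) _
        rw [lintegral_indicator ht, lintegral_add_left ?_,
          lintegral_const_mul' _ _ ENNReal.ofReal_ne_top]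
        exact (hv.continuous_fderiv one_ne_zero).enorm.measurable

theorem exists_eLpNorm_sub_setAverage_le [CompleteSpace F] {p : ℝ≥0}
    (hp : (finrank ℝ E : ℝ≥0).HolderConjugate p) :
    ∃ C : ℝ≥0, ∀ v : E → F, ContDiff ℝ 1 v → ∀ (x₀ : E) {r : ℝ}, 0 < r →
      eLpNorm (fun x ↦ v x - ⨍ y in ball x₀ (2 * r), v y ∂μ) p (μ.restrict (ball x₀ r)) ≤
        C * ∫⁻ x in ball x₀ (2 * r), ‖fderiv ℝ v x‖ₑ ∂μ := by
  obtain ⟨M, hM⟩ := exists_cutoff_ball (E := E)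
  refine ⟨eLpNormLESNormFDerivOneConst μ p * (1 + 2 ^ finrank ℝ E * 4 * M),
    fun v hv x₀ r hr ↦ ?_⟩
  obtain ⟨φ, hφ, hφs, hφ1, hφ_le, hφt, hφL⟩ := hM x₀ hr
  set c := ⨍ y in ball x₀ (2 * r), v y ∂μ
  set G := ∫⁻ x in ball x₀ (2 * r), ‖fderiv ℝ v x‖ₑ ∂μ
  have hfderiv : fderiv ℝ (fun x ↦ v x - c) = fderiv ℝ v := funext fun x ↦ fderiv_sub_const c
  have hML : ENNReal.ofReal (M / r) * ENNReal.ofReal (2 * (2 * r)) = 4 * M := by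
    rw [← ENNReal.ofReal_mul (by positivity),
      show M / r * (2 * (2 * r)) = 4 * M by field_simp; ring,
      ENNReal.ofReal_mul zero_le_four, ENNReal.ofReal_ofNat, ENNReal.ofReal_coe_nnreal]
  calc eLpNorm (fun x ↦ v x - c) p (μ.restrict (ball x₀ r))
      ≤ eLpNormLESNormFDerivOneConst μ p *
          (G + ENNReal.ofReal (M / r) * ∫⁻ x in ball x₀ (2 * r), ‖v x - c‖ₑ ∂μ) := by
        have := eLpNorm_restrict_le_of_cutoff μ hp (hv.sub (contDiff_const (c := c))) hφ hφs
          measurableSet_ball measurableSet_ball hφ1 hφ_le hφt hφL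
        rwa [hfderiv] at this
    _ ≤ eLpNormLESNormFDerivOneConst μ p *
          (G + ENNReal.ofReal (M / r) * (2 ^ finrank ℝ E * ENNReal.ofReal (2 * (2 * r)) * G)) := by
        gcongr
        exact lintegral_enorm_sub_setAverage_le μ hv x₀ (by positivity)
    _ = _ := by
        rw [show ENNReal.ofReal (M / r) * (2 ^ finrank ℝ E * ENNReal.ofReal (2 * (2 * r)) * G) =
            2 ^ finrank ℝ E * (ENNReal.ofReal (M / r) * ENNReal.ofReal (2 * (2 * r))) * G by ring,
          hML]
        push_cast
        ring

theorem measureReal_ball_inv_rpow_one_sub [Nontrivial E] (x₀ : E) {r : ℝ} (hr : 0 < r) :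
    (μ.real (ball x₀ r))⁻¹ ^ (1 - (finrank ℝ E : ℝ)⁻¹) =
      2 ^ finrank ℝ E * μ.real (ball 0 1) ^ (finrank ℝ E : ℝ)⁻¹ * r *
        (μ.real (ball x₀ (2 * r)))⁻¹ := by
  set d := finrank ℝ E
  have hω : 0 < μ.real (ball (0 : E) 1) :=
    ENNReal.toReal_pos (measure_ball_pos μ 0 one_pos).ne' measure_ball_lt_top.ne
  have hball : ∀ ρ, 0 < ρ → μ.real (ball x₀ ρ) = ρ ^ d * μ.real (ball 0 1) := fun ρ hρ ↦ by
    rw [measureReal_def, Measure.addHaar_ball μ x₀ hρ.le, ENNReal.toReal_mul,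
      ENNReal.toReal_ofReal (by positivity), measureReal_def]
  rw [hball r hr, hball (2 * r) (by positivity), Real.rpow_sub (by positivity), Real.rpow_one,
    Real.inv_rpow (by positivity), Real.mul_rpow (by positivity) hω.le,
    Real.pow_rpow_inv_natCast hr.le finrank_pos.ne', mul_pow]
  field_simp

theorem exists_eLpNorm_restrict_ball_le_of_measure_support_le [CompleteSpace F] {p : ℝ≥0}
    (hp : (finrank ℝ E : ℝ≥0).HolderConjugate p) :
    ∃ C : ℝ≥0, ∀ u : E → F, ContDiff ℝ 1 u → ∀ (x₀ : E) {r : ℝ}, 0 < r → ∀ {γ : ℝ≥0∞}, γ < 1 →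
      μ {x ∈ ball x₀ r | u x ≠ 0} ≤ γ * μ (ball x₀ r) →
      eLpNorm u p (μ.restrict (ball x₀ r)) ≤
        (1 + (1 - γ)⁻¹ ^ (1 / (p : ℝ))) * C * ∫⁻ x in ball x₀ (2 * r), ‖fderiv ℝ u x‖ₑ ∂μ := by
  obtain ⟨C, hC⟩ := exists_eLpNorm_sub_setAverage_le (F := F) μ hp
  refine ⟨C, fun u hu x₀ r hr γ hγ hsupp ↦ ?_⟩
  have hp1 : (1 : ℝ≥0∞) ≤ p := ENNReal.one_le_coe_iff.mpr hp.symm.lt.le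
  calc eLpNorm u p (μ.restrict (ball x₀ r))
      ≤ (1 + (1 - γ)⁻¹ ^ (1 / (p : ℝ))) *
          eLpNorm (fun x ↦ u x - ⨍ y in ball x₀ (2 * r), u y ∂μ) p (μ.restrict (ball x₀ r)) := by
        simpa only [ENNReal.coe_toReal] using eLpNorm_restrict_le_of_measure_support_le
          measurableSet_ball measure_ball_lt_top.ne hu.continuous.stronglyMeasurable hp1 hγ hsupp _
    _ ≤ _ := by
        rw [mul_assoc]
        gcongr
        exact hC u hu x₀ hr

theorem exists_toReal_eLpNorm_restrict_ball_le_of_measure_support_le [CompleteSpace F]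
    {p : ℝ≥0} (hp : (finrank ℝ E : ℝ≥0).HolderConjugate p) :
    ∃ C : ℝ, 0 < C ∧ ∀ u : E → F, ContDiff ℝ 1 u → ∀ (x₀ : E) {r : ℝ}, 0 < r →
      ∀ {γ : ℝ}, 0 ≤ γ → γ < 1 → μ {x ∈ ball x₀ r | u x ≠ 0} ≤ ENNReal.ofReal γ * μ (ball x₀ r) →
      (eLpNorm u p (μ.restrict (ball x₀ r))).toReal ≤
        C / (1 - γ ^ (1 - 1 / (p : ℝ))) * ∫ x in ball x₀ (2 * r), ‖fderiv ℝ u x‖ ∂μ := by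
  obtain ⟨C, hC⟩ := exists_eLpNorm_restrict_ball_le_of_measure_support_le (F := F) μ hp
  refine ⟨2 * (C + 1), by positivity, fun u hu x₀ r hr γ hγ0 hγ1 hsupp ↦ ?_⟩
  have hp1 : (1 : ℝ) < p := by exact_mod_cast hp.symm.lt
  set b := 1 / (p : ℝ)
  have hb1 : b < 1 := (div_lt_one (zero_lt_one.trans hp1)).mpr hp1
  have h1γ : 0 < 1 - γ := by linarith
  have hDu : Continuous (fderiv ℝ u) := hu.continuous_fderiv one_ne_zero
  have hG : ∫⁻ x in ball x₀ (2 * r), ‖fderiv ℝ u x‖ₑ ∂μ ≠ ∞ :=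
    ((hDu.continuousOn.integrableOn_compact (isCompact_closedBall x₀ (2 * r))).mono_set
      ball_subset_closedBall).2.ne
  have hfactor : 1 + (1 - ENNReal.ofReal γ)⁻¹ ^ b = ENNReal.ofReal (1 + (1 - γ)⁻¹ ^ b) := by
    rw [← ENNReal.ofReal_one, ← ENNReal.ofReal_sub _ hγ0, ← ENNReal.ofReal_inv_of_pos h1γ,
      ENNReal.ofReal_rpow_of_nonneg (inv_pos.2 h1γ).le (by positivity),
      ← ENNReal.ofReal_add zero_le_one (by positivity)]
  have hbound := hC u hu x₀ hr (ENNReal.ofReal_lt_one.mpr hγ1) hsupp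
  rw [hfactor] at hbound
  refine (ENNReal.toReal_mono (by finiteness) hbound).trans ?_
  rw [ENNReal.toReal_mul, ENNReal.toReal_mul, ENNReal.toReal_ofReal (by positivity),
    ENNReal.coe_toReal, ← integral_norm_eq_lintegral_enorm hDu.aestronglyMeasurable]
  have hfac := one_add_inv_one_sub_rpow_le hγ0 hγ1 (by positivity) hb1
  calc (1 + (1 - γ)⁻¹ ^ b) * C * ∫ x in ball x₀ (2 * r), ‖fderiv ℝ u x‖ ∂μ
      ≤ 2 / (1 - γ ^ (1 - b)) * (C + 1) * ∫ x in ball x₀ (2 * r), ‖fderiv ℝ u x‖ ∂μ := by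
        gcongr
        · exact (by positivity : (0 : ℝ) ≤ 1 + _).trans hfac
        · exact le_add_of_nonneg_right zero_le_one
    _ = _ := by ring

theorem exists_setAverage_rpow_le_of_measure_support_le [CompleteSpace F] {p : ℝ≥0}
    (hp : (finrank ℝ E : ℝ≥0).HolderConjugate p) :
    ∃ C : ℝ, 0 < C ∧ ∀ u : E → F, ContDiff ℝ 1 u → ∀ (x₀ : E) (r : ℝ), 0 < r →
      ∀ γ : ℝ, 0 ≤ γ → γ < 1 →
      μ {x ∈ ball x₀ r | u x ≠ 0} ≤ ENNReal.ofReal γ * μ (ball x₀ r) →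
      (⨍ x in ball x₀ r, ‖u x‖ ^ (p : ℝ) ∂μ) ^ (1 / (p : ℝ)) ≤
        C / (1 - γ ^ (1 - 1 / (p : ℝ))) * r * ⨍ x in ball x₀ (2 * r), ‖fderiv ℝ u x‖ ∂μ := by
  obtain ⟨C, hC, hbound⟩ :=
    exists_toReal_eLpNorm_restrict_ball_le_of_measure_support_le (F := F) μ hp
  have : Nontrivial E :=
    Module.nontrivial_of_finrank_pos (R := ℝ) (by exact_mod_cast zero_lt_one.trans hp.lt)
  have hpd : 1 / (p : ℝ) = 1 - (finrank ℝ E : ℝ)⁻¹ := by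
    rw [one_div, ← hp.coe.one_sub_inv, NNReal.coe_natCast]
  set ω := μ.real (ball (0 : E) 1)
  have hω : 0 < ω := ENNReal.toReal_pos (measure_ball_pos μ 0 one_pos).ne' measure_ball_lt_top.ne
  refine ⟨C * (2 ^ finrank ℝ E * ω ^ (finrank ℝ E : ℝ)⁻¹), by positivity,
    fun u hu x₀ r hr γ hγ0 hγ1 hsupp ↦ ?_⟩
  calc (⨍ x in ball x₀ r, ‖u x‖ ^ (p : ℝ) ∂μ) ^ (1 / (p : ℝ))
      = 2 ^ finrank ℝ E * ω ^ (finrank ℝ E : ℝ)⁻¹ * r * (μ.real (ball x₀ (2 * r)))⁻¹ *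
          (eLpNorm u p (μ.restrict (ball x₀ r))).toReal := by
        rw [setAverage_norm_rpow_rpow_one_div (zero_lt_one.trans hp.symm.lt).ne'
          hu.continuous.aestronglyMeasurable, hpd, measureReal_ball_inv_rpow_one_sub μ x₀ hr]
    _ ≤ 2 ^ finrank ℝ E * ω ^ (finrank ℝ E : ℝ)⁻¹ * r * (μ.real (ball x₀ (2 * r)))⁻¹ *
          (C / (1 - γ ^ (1 - 1 / (p : ℝ))) * ∫ x in ball x₀ (2 * r), ‖fderiv ℝ u x‖ ∂μ) := by
        gcongr
        exact hbound u hu x₀ hr hγ0 hγ1 hsupp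
    _ = _ := by
        rw [setAverage_eq, smul_eq_mul]
        ring

end AddHaar

/-- (Lemma 2.1, Euclidean case) Let `t = n/(n-1)`. There is `C = C(n)` such that if
`u` is continuously differentiable, `B = B(x₀,r)` is a Euclidean ball, and the set
`A = {x ∈ B : u(x) ≠ 0}` satisfies `Lⁿ(A) ≤ γ Lⁿ(B)` with `0 < γ < 1`, then
`(⨍_B |u|^t)^{1/t} ≤ C/(1 - γ^{1-1/t}) · r · ⨍_{2B} ‖∇u‖`. -/
theorem sobolev_inequality_small_support
    (n : ℕ) (hn : 2 ≤ n) (t : ℝ) (ht : t = (n : ℝ) / ((n : ℝ) - 1)) :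
    ∃ C : ℝ, 0 < C ∧
      ∀ (u : EuclideanSpace ℝ (Fin n) → ℝ), ContDiff ℝ 1 u →
      ∀ (x₀ : EuclideanSpace ℝ (Fin n)) (r : ℝ), 0 < r →
      ∀ γ : ℝ, 0 < γ → γ < 1 →
      volume {x ∈ ball x₀ r | u x ≠ 0} ≤ ENNReal.ofReal γ * volume (ball x₀ r) →
      (⨍ x in ball x₀ r, |u x| ^ t ∂volume) ^ (1 / t) ≤
        C / (1 - γ ^ (1 - 1 / t)) * r * ⨍ x in ball x₀ (2 * r), ‖fderiv ℝ u x‖ ∂volume := by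
  have hn1 : (1 : ℝ≥0) < n := by exact_mod_cast hn
  have hp : (finrank ℝ (EuclideanSpace ℝ (Fin n)) : ℝ≥0).HolderConjugate
      (NNReal.conjExponent n) := by
    rw [finrank_euclideanSpace_fin]
    exact .conjExponent hn1
  have hpt : (NNReal.conjExponent n : ℝ) = t := by
    rw [ht, NNReal.conjExponent, NNReal.coe_div, NNReal.coe_sub hn1.le, NNReal.coe_natCast,
      NNReal.coe_one]
  obtain ⟨C, hC, hineq⟩ := exists_setAverage_rpow_le_of_measure_support_le (F := ℝ) volume hp
  refine ⟨C, hC, fun u hu x₀ r hr γ hγ0 hγ1 hsupp ↦ ?_⟩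
  simpa only [hpt, Real.norm_eq_abs] using hineq u hu x₀ r hr γ hγ0.le hγ1 hsupp
end

section
/- Let (X, ρ) be a connected metric space and let μ be a Borel measure on X that is doubling with constant C_d ≥ 1, i.e. 0 < μ(B(x,2r)) ≤ C_d μ(B(x,r)) < ∞ for every x ∈ X and r > 0 (where B(x,r) is the open ball of ρ). Then there is a constant C' > 1, depending only on C_d, such that for every x ∈ X and r > 0 with X \ B(x,2r) ≠ ∅, one has μ(B(x,2r) \ B(x,r)) ≥ μ(B(x,r))/C' ≥ μ(B(x,2r))/C'². -/
open MeasureTheory Metric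

/-- Annulus measure estimate for a doubling measure on a connected metric space: if
`X \ B(x,2r) ≠ ∅`, then `μ(B(x,2r) \ B(x,r)) ≥ μ(B(x,r))/C' ≥ μ(B(x,2r))/C'²`, with
`C' > 1` depending only on the doubling constant. -/
theorem annulus_measure_estimate
    (X : Type*) [MetricSpace X] [ConnectedSpace X] [MeasurableSpace X] [BorelSpace X]
    (μ : Measure X) (Cd : ℝ) (hCd : 1 ≤ Cd)
    (hpos : ∀ (x : X) (r : ℝ), 0 < r → 0 < μ (ball x r))
    (hfin : ∀ (x : X) (r : ℝ), 0 < r → μ (ball x r) < ⊤)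
    (hdoub : ∀ (x : X) (r : ℝ), 0 < r →
      μ (ball x (2 * r)) ≤ ENNReal.ofReal Cd * μ (ball x r)) :
    ∃ C' : ℝ, 1 < C' ∧ ∀ (x : X) (r : ℝ), 0 < r → ((ball x (2 * r))ᶜ).Nonempty →
      μ (ball x (2 * r)) / ENNReal.ofReal (C' ^ 2) ≤ μ (ball x r) / ENNReal.ofReal C' ∧
      μ (ball x r) / ENNReal.ofReal C' ≤ μ (ball x (2 * r) \ ball x r) := by
  have hCd0 : (0:ℝ) < Cd := lt_of_lt_of_le one_pos hCd
  have hCd3 : Cd ≤ Cd ^ 3 := le_self_pow₀ hCd (by norm_num)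
  refine ⟨Cd ^ 3 + 1, by nlinarith [pow_pos hCd0 3], ?_⟩
  intro x r hr hne
  set C' : ℝ := Cd ^ 3 + 1 with hC'
  have hC'pos : (0:ℝ) < C' := by positivity
  have hp0 : ENNReal.ofReal C' ≠ 0 := (ENNReal.ofReal_pos.2 hC'pos).ne'
  have hpt : ENNReal.ofReal C' ≠ ⊤ := ENNReal.ofReal_ne_top
  -- find y with dist x y = 3r/2
  obtain ⟨z, hz⟩ := hne
  have hz' : 2 * r ≤ dist x z := by
    simpa [ball, dist_comm, not_lt] using hz
  have hmem : (3 * r / 2) ∈ Set.Icc (dist x x) (dist x z) := by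
    constructor
    · simp; linarith
    · linarith
  obtain ⟨y, hy⟩ := intermediate_value_univ x z (continuous_const.dist continuous_id) hmem
  have hy : dist x y = 3 * r / 2 := hy
  -- ball y (r/2) ⊆ annulus
  have hsub : ball y (r / 2) ⊆ ball x (2 * r) \ ball x r := by
    intro w hw
    simp only [mem_ball] at hw
    constructor
    · simp only [mem_ball]
      have h := dist_triangle w y x
      rw [dist_comm y x, hy] at h
      linarith
    · simp only [mem_ball, not_lt]
      have h := dist_triangle x w y
      rw [hy, dist_comm x w] at h
      linarith
  -- ball x r ⊆ ball y (4r)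
  have hsub2 : ball x r ⊆ ball y (4 * r) := by
    intro w hw
    simp only [mem_ball] at hw ⊢
    have h := dist_triangle w x y
    rw [hy] at h
    linarith
  -- doubling thrice: μ (ball y (4r)) ≤ Cd^3 * μ (ball y (r/2))
  have h1 : μ (ball y (4 * r)) ≤ ENNReal.ofReal Cd * μ (ball y (2 * r)) := by
    have := hdoub y (2 * r) (by linarith)
    calc μ (ball y (4 * r)) = μ (ball y (2 * (2 * r))) := by ring_nf
    _ ≤ _ := this
  have h2 : μ (ball y (2 * r)) ≤ ENNReal.ofReal Cd * μ (ball y r) := hdoub y r hr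
  have h3 : μ (ball y r) ≤ ENNReal.ofReal Cd * μ (ball y (r / 2)) := by
    have := hdoub y (r / 2) (by linarith)
    calc μ (ball y r) = μ (ball y (2 * (r / 2))) := by ring_nf
    _ ≤ _ := this
  have hkey : μ (ball x r) ≤ ENNReal.ofReal (Cd ^ 3) * μ (ball y (r / 2)) := by
    calc μ (ball x r) ≤ μ (ball y (4 * r)) := measure_mono hsub2
    _ ≤ ENNReal.ofReal Cd * (ENNReal.ofReal Cd * (ENNReal.ofReal Cd * μ (ball y (r/2)))) :=
        h1.trans (mul_le_mul_right (h2.trans (mul_le_mul_right h3 _)) _)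
    _ = ENNReal.ofReal (Cd ^ 3) * μ (ball y (r / 2)) := by
        rw [show Cd ^ 3 = Cd * (Cd * Cd) by ring, ENNReal.ofReal_mul hCd0.le,
          ENNReal.ofReal_mul hCd0.le]
        ring
  have hann : μ (ball x r) ≤ ENNReal.ofReal C' * μ (ball x (2 * r) \ ball x r) := by
    calc μ (ball x r) ≤ ENNReal.ofReal (Cd ^ 3) * μ (ball y (r / 2)) := hkey
    _ ≤ ENNReal.ofReal C' * μ (ball x (2 * r) \ ball x r) :=
        mul_le_mul' (ENNReal.ofReal_le_ofReal (by simp [hC'])) (measure_mono hsub)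
  constructor
  · -- μ(B2r)/C'^2 ≤ μ(Br)/C'
    have h2r : μ (ball x (2 * r)) ≤ ENNReal.ofReal C' * μ (ball x r) := by
      refine (hdoub x r hr).trans (mul_le_mul_left (ENNReal.ofReal_le_ofReal ?_) _)
      linarith
    rw [show (C' ^ 2) = C' * C' by ring, ENNReal.ofReal_mul hC'pos.le]
    calc μ (ball x (2 * r)) / (ENNReal.ofReal C' * ENNReal.ofReal C')
        ≤ ENNReal.ofReal C' * μ (ball x r) / (ENNReal.ofReal C' * ENNReal.ofReal C') :=
          ENNReal.div_le_div_right h2r _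
    _ = μ (ball x r) / ENNReal.ofReal C' := ENNReal.mul_div_mul_left _ _ hp0 hpt
  · rw [ENNReal.div_le_iff_le_mul (Or.inl hp0) (Or.inl (by simp))]
    rw [mul_comm]
    exact hann
end
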